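/- arXiv:1412.8523 — 9 statements merged into one kernel-verified Lean document; each statement's English description precedes it below -/
import Mathlib

section
/- If m is an schv model satisfying Lambda-Independence that realizes an empirical model e, then e satisfies No-Signalling. -/
open Finset

noncomputable section

/-- Restriction of a global assignment `ω : X → O` to a context `U`. -/
def restr {X O : Type} (U : Finset X) (ω : X → O) : {x // x ∈ U} → O :=
  fun x => ω x.1

/-- Restriction of a section on `U` along a subset inclusion `V ⊆ U`. -/
def restrSec {X O : Type} {U V : Finset X} (h : V ⊆ U)
    (t : {x // x ∈ U} → O) : {x // x ∈ V} → O :=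
  fun x => t ⟨x.1, h x.2⟩

/-- The total weight `e(U)` of a context `U` under the table `e`. -/
def eCtx {X O : Type} [Fintype X] [DecidableEq X] [Fintype O] [DecidableEq O]
    (𝒰 : Finset (Finset X))
    (e : (U : {U // U ∈ 𝒰}) → ({x // x ∈ U.1} → O) → ℝ)
    (U : {U // U ∈ 𝒰}) : ℝ :=
  ∑ s : {x // x ∈ U.1} → O, e U s

/-- `e` is an empirical model over the cover `𝒰`: it is a nonnegative table of
total mass one, assigning positive weight to every context. -/
def IsEmpirical {X O : Type} [Fintype X] [DecidableEq X] [Fintype O] [DecidableEq O]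
    (𝒰 : Finset (Finset X))
    (e : (U : {U // U ∈ 𝒰}) → ({x // x ∈ U.1} → O) → ℝ) : Prop :=
  (∀ U s, 0 ≤ e U s) ∧
  (∑ U : {U // U ∈ 𝒰}, eCtx 𝒰 e U = 1) ∧
  (∀ U : {U // U ∈ 𝒰}, 0 < eCtx 𝒰 e U)

/-- The conditional probability `e_U(s) = e(U,s)/e(U)`. -/
def eCond {X O : Type} [Fintype X] [DecidableEq X] [Fintype O] [DecidableEq O]
    (𝒰 : Finset (Finset X))
    (e : (U : {U // U ∈ 𝒰}) → ({x // x ∈ U.1} → O) → ℝ)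
    (U : {U // U ∈ 𝒰}) (s : {x // x ∈ U.1} → O) : ℝ :=
  e U s / eCtx 𝒰 e U

/-- The No-Signalling condition: for any two contexts, the two conditional
distributions have the same marginal on the intersection. -/
def NoSignalling {X O : Type} [Fintype X] [DecidableEq X] [Fintype O] [DecidableEq O]
    (𝒰 : Finset (Finset X))
    (e : (U : {U // U ∈ 𝒰}) → ({x // x ∈ U.1} → O) → ℝ) : Prop :=
  ∀ U U' : {U // U ∈ 𝒰}, ∀ s : {x // x ∈ U.1 ∩ U'.1} → O,
    (∑ t : {x // x ∈ U.1} → O,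
      if restrSec (V := U.1 ∩ U'.1) (fun _ hx => (Finset.mem_inter.mp hx).1) t = s
        then eCond 𝒰 e U t else 0) =
    (∑ t' : {x // x ∈ U'.1} → O,
      if restrSec (V := U.1 ∩ U'.1) (fun _ hx => (Finset.mem_inter.mp hx).2) t' = s
        then eCond 𝒰 e U' t' else 0)

/-- Marginal of an schv model on global assignments. -/
def mOmega {X O : Type} [Fintype X] [DecidableEq X] [Fintype O] [DecidableEq O]
    (𝒰 : Finset (Finset X)) (m : (X → O) → {U // U ∈ 𝒰} → ℝ) (ω : X → O) : ℝ :=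
  ∑ U : {U // U ∈ 𝒰}, m ω U

/-- Marginal of an schv model on contexts. -/
def mCtx {X O : Type} [Fintype X] [DecidableEq X] [Fintype O] [DecidableEq O]
    (𝒰 : Finset (Finset X)) (m : (X → O) → {U // U ∈ 𝒰} → ℝ) (U : {U // U ∈ 𝒰}) : ℝ :=
  ∑ ω : X → O, m ω U

/-- `m` is a signed canonical hidden-variable model: a signed measure of total mass one
on `Ω × 𝒰`. -/
def IsSchv {X O : Type} [Fintype X] [DecidableEq X] [Fintype O] [DecidableEq O]
    (𝒰 : Finset (Finset X)) (m : (X → O) → {U // U ∈ 𝒰} → ℝ) : Prop :=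
  ∑ ω : X → O, ∑ U : {U // U ∈ 𝒰}, m ω U = 1

/-- Lambda-Independence: `m` factors as the product of its two marginals. -/
def LambdaIndep {X O : Type} [Fintype X] [DecidableEq X] [Fintype O] [DecidableEq O]
    (𝒰 : Finset (Finset X)) (m : (X → O) → {U // U ∈ 𝒰} → ℝ) : Prop :=
  ∀ ω U, m ω U = mOmega 𝒰 m ω * mCtx 𝒰 m U

/-- The canonical hidden-variable model `m` realizes the empirical table `e`. -/
def Realizes {X O : Type} [Fintype X] [DecidableEq X] [Fintype O] [DecidableEq O]
    (𝒰 : Finset (Finset X)) (m : (X → O) → {U // U ∈ 𝒰} → ℝ)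
    (e : (U : {U // U ∈ 𝒰}) → ({x // x ∈ U.1} → O) → ℝ) : Prop :=
  ∀ (U : {U // U ∈ 𝒰}) (s : {x // x ∈ U.1} → O),
    e U s = ∑ ω : X → O, if restr U.1 ω = s then m ω U else 0

/-- The linear map `L : ℝ^Ω → ℝ^E`. -/
def Lmap {X O : Type} [Fintype X] [DecidableEq X] [Fintype O] [DecidableEq O]
    (𝒰 : Finset (Finset X)) (v : (X → O) → ℝ) :
    (Σ U : {U // U ∈ 𝒰}, ({x // x ∈ U.1} → O)) → ℝ :=
  fun p => ∑ ω : X → O, if restr p.1.1 ω = p.2 then v ω else 0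

/-- The vector in `ℝ^E` induced by an empirical table `e`. -/
def indVec {X O : Type} [Fintype X] [DecidableEq X] [Fintype O] [DecidableEq O]
    (𝒰 : Finset (Finset X))
    (e : (U : {U // U ∈ 𝒰}) → ({x // x ∈ U.1} → O) → ℝ) :
    (Σ U : {U // U ∈ 𝒰}, ({x // x ∈ U.1} → O)) → ℝ :=
  fun p => eCond 𝒰 e p.1 p.2

/-- if a Lambda-Independent schv model realizes an empirical model `e`,
then `e` satisfies No-Signalling. -/
theorem noSignalling_of_lambdaIndep {X O : Type} [Fintype X] [DecidableEq X]
    [Fintype O] [DecidableEq O]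
    (𝒰 : Finset (Finset X))
    (e : (U : {U // U ∈ 𝒰}) → ({x // x ∈ U.1} → O) → ℝ)
    (m : (X → O) → {U // U ∈ 𝒰} → ℝ)
    (he : IsEmpirical 𝒰 e) (hm : IsSchv 𝒰 m) (hLI : LambdaIndep 𝒰 m)
    (hr : Realizes 𝒰 m e) :
    NoSignalling 𝒰 e := by
  -- total mass of mOmega is 1
  have hmass : ∑ ω : X → O, mOmega 𝒰 m ω = 1 := hm
  -- e U s = mCtx U * (sum over ω with restr = s of mOmega)
  have he1 : ∀ (U : {U // U ∈ 𝒰}) (s : {x // x ∈ U.1} → O),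
      e U s = mCtx 𝒰 m U * ∑ ω : X → O,
        (if restr U.1 ω = s then mOmega 𝒰 m ω else 0) := by
    intro U s
    rw [hr U s, Finset.mul_sum]
    apply Finset.sum_congr rfl
    intro ω _
    rw [hLI ω U]
    split <;> ring
  -- eCtx U = mCtx U
  have he2 : ∀ U : {U // U ∈ 𝒰}, eCtx 𝒰 e U = mCtx 𝒰 m U := by
    intro U
    unfold eCtx
    have : ∀ s, e U s = mCtx 𝒰 m U * ∑ ω : X → O,
        (if restr U.1 ω = s then mOmega 𝒰 m ω else 0) := he1 U
    simp only [this]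
    rw [← Finset.mul_sum, Finset.sum_comm]
    have : ∀ ω : X → O, (∑ s : {x // x ∈ U.1} → O,
        if restr U.1 ω = s then mOmega 𝒰 m ω else 0) = mOmega 𝒰 m ω := by
      intro ω; simp
    simp only [this, hmass, mul_one]
  have hcond : ∀ (U : {U // U ∈ 𝒰}) (s : {x // x ∈ U.1} → O),
      eCond 𝒰 e U s = ∑ ω : X → O,
        (if restr U.1 ω = s then mOmega 𝒰 m ω else 0) := by
    intro U s
    have hpos := he.2.2 U
    have hne : mCtx 𝒰 m U ≠ 0 := by rw [← he2]; exact hpos.ne'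
    unfold eCond
    rw [he1 U s, he2 U]
    field_simp
  intro U U' s
  have lhs : (∑ t : {x // x ∈ U.1} → O,
      if restrSec (V := U.1 ∩ U'.1) (fun _ hx => (Finset.mem_inter.mp hx).1) t = s
        then eCond 𝒰 e U t else 0) =
      ∑ ω : X → O, (if restr (U.1 ∩ U'.1) ω = s then mOmega 𝒰 m ω else 0) := by
    simp only [hcond]
    have step : ∀ t : {x // x ∈ U.1} → O,
        (if restrSec (V := U.1 ∩ U'.1) (fun _ hx => (Finset.mem_inter.mp hx).1) t = s
          then (∑ ω : X → O, if restr U.1 ω = t then mOmega 𝒰 m ω else 0) else 0) =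
        ∑ ω : X → O,
          (if restrSec (V := U.1 ∩ U'.1) (fun _ hx => (Finset.mem_inter.mp hx).1) t = s
            then (if restr U.1 ω = t then mOmega 𝒰 m ω else 0) else 0) := by
      intro t; split <;> simp
    simp only [step]
    rw [Finset.sum_comm]
    apply Finset.sum_congr rfl
    intro ω _
    rw [Finset.sum_eq_single (restr U.1 ω)]
    · have h2 : restrSec (V := U.1 ∩ U'.1) (fun _ hx => (Finset.mem_inter.mp hx).1)
          (restr U.1 ω) = restr (U.1 ∩ U'.1) ω := rfl
      rw [h2]
      split <;> simp
    · intro t _ htne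
      split
      · rw [if_neg (fun h => htne h.symm)]
      · rfl
    · intro h; exact absurd (Finset.mem_univ _) h
  have rhs : (∑ t' : {x // x ∈ U'.1} → O,
      if restrSec (V := U.1 ∩ U'.1) (fun _ hx => (Finset.mem_inter.mp hx).2) t' = s
        then eCond 𝒰 e U' t' else 0) =
      ∑ ω : X → O, (if restr (U.1 ∩ U'.1) ω = s then mOmega 𝒰 m ω else 0) := by
    simp only [hcond]
    have step : ∀ t : {x // x ∈ U'.1} → O,
        (if restrSec (V := U.1 ∩ U'.1) (fun _ hx => (Finset.mem_inter.mp hx).2) t = s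
          then (∑ ω : X → O, if restr U'.1 ω = t then mOmega 𝒰 m ω else 0) else 0) =
        ∑ ω : X → O,
          (if restrSec (V := U.1 ∩ U'.1) (fun _ hx => (Finset.mem_inter.mp hx).2) t = s
            then (if restr U'.1 ω = t then mOmega 𝒰 m ω else 0) else 0) := by
      intro t; split <;> simp
    simp only [step]
    rw [Finset.sum_comm]
    apply Finset.sum_congr rfl
    intro ω _
    rw [Finset.sum_eq_single (restr U'.1 ω)]
    · have h2 : restrSec (V := U.1 ∩ U'.1) (fun _ hx => (Finset.mem_inter.mp hx).2)
          (restr U'.1 ω) = restr (U.1 ∩ U'.1) ω := rfl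
      rw [h2]
      split <;> simp
    · intro t _ htne
      split
      · rw [if_neg (fun h => htne h.symm)]
      · rfl
    · intro h; exact absurd (Finset.mem_univ _) h
  rw [lhs, rhs]
end
end

section
/- The dimension of W, the linear span in ℝ^E of the set of vectors induced by No-Signalling empirical models, is at most D := Σ_{V ∈ Σ} (l−1)^{|V|}, where Σ is the set of partial contexts. -/
open Finset

noncomputable section

/-!
Fix an outcome `z`. The marginal of a No-Signalling table on a partial context `V` does not
depend on the context `U ⊇ V` it is computed from, so it suffices to show that the linear map
sending a No-Signalling vector to its marginals at the sections `t : V → O` avoiding `z` is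
injective; there are `(l - 1) ^ |V|` such sections for each `V`. If all these marginals of a
table `d` on `O ^ U` vanish, then `d s = 0` by strong induction on the number of
`z`-coordinates of `s`: the marginal of `d` on the set `V` where `s ≠ z`, evaluated at `s|V`,
is `d s` plus values of `d` at sections with fewer `z`-coordinates.
-/

section Support

variable {X O : Type} [DecidableEq O] {U : Finset X}

def supportAway (z : O) (s : {x // x ∈ U} → O) : Finset X :=
  (univ.filter fun x => s x ≠ z).map (Function.Embedding.subtype _)

lemma mem_supportAway {z : O} {s : {x // x ∈ U} → O} {x : X} :
    x ∈ supportAway z s ↔ ∃ hx : x ∈ U, s ⟨x, hx⟩ ≠ z := by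
  simp [supportAway]

lemma supportAway_subset (z : O) (s : {x // x ∈ U} → O) : supportAway z s ⊆ U :=
  fun _ hx => (mem_supportAway.mp hx).1

lemma restrSec_supportAway_eq_iff (z : O) (r s : {x // x ∈ U} → O) :
    restrSec (supportAway_subset z s) r = restrSec (supportAway_subset z s) s ↔
      ∀ x, s x ≠ z → r x = s x := by
  constructor
  · intro h x hx
    exact congr_fun h ⟨x.1, mem_supportAway.mpr ⟨x.2, hx⟩⟩
  · intro h
    funext y
    exact h _ (mem_supportAway.mp y.2).2

lemma restrSec_supportAway_ne (z : O) (s : {x // x ∈ U} → O)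
    (y : {x // x ∈ supportAway z s}) :
    restrSec (supportAway_subset z s) s y ≠ z :=
  (mem_supportAway.mp y.2).2

lemma filter_eq_ssubset_of_ne_of_agree {z : O} {r s : {x // x ∈ U} → O}
    (hrs : r ≠ s) (h : ∀ x, s x ≠ z → r x = s x) :
    univ.filter (fun x => r x = z) ⊂ univ.filter (fun x => s x = z) := by
  obtain ⟨x, hx⟩ := Function.ne_iff.mp hrs
  have hsx : s x = z := by_contra fun hs => hx (h x hs)
  refine (ssubset_iff_of_subset fun y hy => ?_).mpr ⟨x, ?_, ?_⟩
  · simp only [mem_filter, mem_univ, true_and] at hy ⊢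
    by_contra hsy
    exact hsy (h y hsy ▸ hy)
  · simpa using hsx
  · simpa [hsx] using hx

end Support

section Marginal

variable {X O : Type} [DecidableEq X] [Fintype O] [DecidableEq O]

def marginal {U V : Finset X} (h : V ⊆ U) :
    (({x // x ∈ U} → O) → ℝ) →ₗ[ℝ] (({x // x ∈ V} → O) → ℝ) where
  toFun d t := ∑ r, if restrSec h r = t then d r else 0
  map_add' d d' := by
    funext t
    simp only [Pi.add_apply, ← sum_add_distrib, ite_add_ite, add_zero]
  map_smul' c d := by
    funext t
    simp only [Pi.smul_apply, smul_eq_mul, RingHom.id_apply, mul_sum, mul_ite, mul_zero]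

lemma marginal_apply {U V : Finset X} (h : V ⊆ U) (d : ({x // x ∈ U} → O) → ℝ)
    (t : {x // x ∈ V} → O) :
    marginal h d t = ∑ r, if restrSec h r = t then d r else 0 :=
  rfl

lemma marginal_marginal {V I U : Finset X} (hVI : V ⊆ I) (hIU : I ⊆ U)
    (d : ({x // x ∈ U} → O) → ℝ) :
    marginal hVI (marginal hIU d) = marginal (hVI.trans hIU) d := by
  funext t
  simp only [marginal_apply, ite_sum_zero]
  rw [sum_comm]
  refine sum_congr rfl fun r _ => ?_
  rw [sum_eq_single (restrSec hIU r)] <;> aesop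

lemma eq_zero_of_marginal_eq_zero {U : Finset X} (z : O) {d : ({x // x ∈ U} → O) → ℝ}
    (hd : ∀ (V : Finset X) (h : V ⊆ U), ∀ t ∈ Fintype.piFinset fun _ => ({z}ᶜ : Finset O),
      marginal h d t = 0) :
    d = 0 := by
  funext s
  induction hn : (univ.filter fun x => s x = z).card using Nat.strong_induction_on
    generalizing s with
  | _ n ih =>
  have hS := supportAway_subset z s
  have hothers : ∀ r ≠ s, restrSec hS r = restrSec hS s → d r = 0 := fun r hrs hr =>
    ih _ (hn ▸ card_lt_card (filter_eq_ssubset_of_ne_of_agree hrs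
      ((restrSec_supportAway_eq_iff z r s).mp hr))) r rfl
  have hmarg := hd _ hS _ (Fintype.mem_piFinset.mpr fun y =>
    mem_compl.mpr (notMem_singleton.mpr (restrSec_supportAway_ne z s y)))
  rwa [marginal_apply, ← add_sum_erase _ _ (mem_univ s), if_pos rfl,
    sum_eq_zero, add_zero] at hmarg
  intro r hr
  split_ifs with h
  · exact hothers r (ne_of_mem_erase hr) h
  · rfl

end Marginal

section NoSignalling

variable {X O : Type} [DecidableEq X] [Fintype O] [DecidableEq O] {𝒰 : Finset (Finset X)}

def restrictContext (U : {U // U ∈ 𝒰}) :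
    ((Σ U : {U // U ∈ 𝒰}, ({x // x ∈ U.1} → O)) → ℝ) →ₗ[ℝ]
      (({x // x ∈ U.1} → O) → ℝ) :=
  LinearMap.funLeft ℝ ℝ (Sigma.mk (β := fun U : {U // U ∈ 𝒰} => {x // x ∈ U.1} → O) U)

def noSignallingSubspace (𝒰 : Finset (Finset X)) :
    Submodule ℝ ((Σ U : {U // U ∈ 𝒰}, ({x // x ∈ U.1} → O)) → ℝ) :=
  ⨅ (U : {U // U ∈ 𝒰}) (U' : {U // U ∈ 𝒰}), LinearMap.eqLocus
    (marginal (inter_subset_left (s₂ := U'.1)) ∘ₗ restrictContext U)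
    (marginal (inter_subset_right (s₁ := U.1)) ∘ₗ restrictContext U')

lemma indVec_mem_noSignallingSubspace [Fintype X]
    {e : (U : {U // U ∈ 𝒰}) → ({x // x ∈ U.1} → O) → ℝ} (he : NoSignalling 𝒰 e) :
    indVec 𝒰 e ∈ noSignallingSubspace 𝒰 := by
  simp only [noSignallingSubspace, Submodule.mem_iInf, LinearMap.mem_eqLocus]
  exact fun U U' => funext (he U U')

lemma marginal_eq_of_mem_noSignallingSubspace
    {v : (Σ U : {U // U ∈ 𝒰}, ({x // x ∈ U.1} → O)) → ℝ}
    (hv : v ∈ noSignallingSubspace 𝒰) (U U' : {U // U ∈ 𝒰}) {V : Finset X}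
    (h : V ⊆ U.1) (h' : V ⊆ U'.1) :
    marginal h (fun t => v ⟨U, t⟩) = marginal h' (fun t => v ⟨U', t⟩) := by
  have hV := subset_inter h h'
  rw [← marginal_marginal hV inter_subset_left,
    ← marginal_marginal hV inter_subset_right]
  simp only [noSignallingSubspace, Submodule.mem_iInf, LinearMap.mem_eqLocus] at hv
  exact congr_arg (marginal hV) (hv U U')

end NoSignalling

section AvoidingSections

variable {X O : Type} [Fintype X] [DecidableEq X] [Fintype O] [DecidableEq O]

def partialContexts (𝒰 : Finset (Finset X)) : Finset (Finset X) :=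
  univ.filter fun V => ∃ U ∈ 𝒰, V ⊆ U

def sectionsAvoiding (z : O) (𝒰 : Finset (Finset X)) :
    Finset (Σ V : Finset X, ({x // x ∈ V} → O)) :=
  (partialContexts 𝒰).sigma fun _ => Fintype.piFinset fun _ => {z}ᶜ

lemma card_sectionsAvoiding (z : O) (𝒰 : Finset (Finset X)) :
    (sectionsAvoiding z 𝒰).card =
      ∑ V ∈ partialContexts 𝒰, (Fintype.card O - 1) ^ V.card := by
  simp [sectionsAvoiding, card_sigma, Fintype.card_piFinset, card_compl]

lemma exists_context_of_mem_sectionsAvoiding {z : O} {𝒰 : Finset (Finset X)}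
    {p : Σ V : Finset X, ({x // x ∈ V} → O)} (hp : p ∈ sectionsAvoiding z 𝒰) :
    ∃ U ∈ 𝒰, p.1 ⊆ U := by
  simpa [sectionsAvoiding, partialContexts] using (mem_sigma.mp hp).1

def avoidingMarginals (z : O) (𝒰 : Finset (Finset X)) :
    ((Σ U : {U // U ∈ 𝒰}, ({x // x ∈ U.1} → O)) → ℝ) →ₗ[ℝ]
      (sectionsAvoiding z 𝒰 → ℝ) :=
  LinearMap.pi fun p =>
    have hU := exists_context_of_mem_sectionsAvoiding p.2
    LinearMap.proj p.1.2 ∘ₗ marginal hU.choose_spec.2 ∘ₗ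
      restrictContext ⟨hU.choose, hU.choose_spec.1⟩

lemma eq_zero_of_avoidingMarginals_eq_zero {z : O} {𝒰 : Finset (Finset X)}
    {v : (Σ U : {U // U ∈ 𝒰}, ({x // x ∈ U.1} → O)) → ℝ}
    (hv : v ∈ noSignallingSubspace 𝒰) (h0 : avoidingMarginals z 𝒰 v = 0) : v = 0 := by
  funext ⟨U, s⟩
  refine congr_fun (eq_zero_of_marginal_eq_zero z (d := fun t => v ⟨U, t⟩) ?_) s
  intro V hVU t ht
  have hp : ⟨V, t⟩ ∈ sectionsAvoiding z 𝒰 := mem_sigma.mpr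
    ⟨mem_filter.mpr ⟨mem_univ _, U.1, U.2, hVU⟩, ht⟩
  have hU := exists_context_of_mem_sectionsAvoiding hp
  rw [marginal_eq_of_mem_noSignallingSubspace hv U ⟨hU.choose, hU.choose_spec.1⟩ hVU
    hU.choose_spec.2]
  exact congr_fun h0 ⟨_, hp⟩

end AvoidingSections

/-- the span `W` of the vectors induced by No-Signalling empirical models
has dimension at most `D = Σ_{V ∈ Σ} (l-1)^{|V|}`, `Σ` the set of partial contexts. -/
theorem finrank_span_noSignalling_le {X : Type} [Fintype X] [DecidableEq X]
    (l : ℕ) (hl : 0 < l) (𝒰 : Finset (Finset X)) :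
    Module.finrank ℝ (Submodule.span ℝ
      {w : (Σ U : {U // U ∈ 𝒰}, ({x // x ∈ U.1} → Fin l)) → ℝ |
        ∃ e : (U : {U // U ∈ 𝒰}) → ({x // x ∈ U.1} → Fin l) → ℝ,
          IsEmpirical 𝒰 e ∧ NoSignalling 𝒰 e ∧ w = indVec 𝒰 e}) ≤
    ∑ V ∈ Finset.univ.filter (fun V : Finset X => ∃ U ∈ 𝒰, V ⊆ U), (l - 1) ^ V.card := by
  let z : Fin l := ⟨0, hl⟩
  have hinj :
      Function.Injective (avoidingMarginals z 𝒰 ∘ₗ (noSignallingSubspace 𝒰).subtype) :=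
    LinearMap.ker_eq_bot.mp <| LinearMap.ker_eq_bot'.mpr fun v hv =>
      Subtype.ext (eq_zero_of_avoidingMarginals_eq_zero v.2 hv)
  calc
    _ ≤ Module.finrank ℝ (noSignallingSubspace 𝒰) := by
      refine Submodule.finrank_mono (Submodule.span_le.mpr ?_)
      rintro _ ⟨e, -, he, rfl⟩
      exact indVec_mem_noSignallingSubspace he
    _ ≤ Module.finrank ℝ (sectionsAvoiding z 𝒰 → ℝ) :=
      LinearMap.finrank_le_finrank_of_injective hinj
    _ = (sectionsAvoiding z 𝒰).card := by simp
    _ = _ := by rw [card_sectionsAvoiding, Fintype.card_fin]; rfl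
end
end

section
/- The dimension of V, the linear span in ℝ^E of the image under L of D±(Ω), is at least D := Σ_{V ∈ Σ} (l−1)^{|V|}, where Σ is the set of partial contexts. -/
open Finset

noncomputable section

/-! Single out the outcome `0`. The assignments `ω` whose support `{x | ω x ≠ 0}` lies in some
context are counted by `D`, as exactly `(l - 1) ^ |V|` assignments have support `V`. The images
`L δ_ω` of their point masses are linearly independent: choose a context `U` containing the support
of `ω`; then `L δ_ω'` is nonzero at the event `(U, ω|_U)` only if `ω'` agrees with `ω` on `U`, which
for `ω' ≠ ω` forces a strictly larger support. So the family is unitriangular with respect to the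
size of the support. -/

theorem linearIndependent_of_unitriangular {ι κ R : Type*} [Fintype ι] [Ring R]
    (v : ι → κ → R) (e : ι → κ) (height : ι → ℕ) (hpivot : ∀ i, v i (e i) = 1)
    (hheight : ∀ i j, j ≠ i → v j (e i) ≠ 0 → height i < height j) :
    LinearIndependent R v := by
  classical
  rw [Fintype.linearIndependent_iff]
  intro c hc
  by_contra! hne
  obtain ⟨i, hi, hmax⟩ := Finset.exists_max_image {j | c j ≠ 0} height
    (by simpa [Finset.Nonempty] using hne)
  have hci : c i ≠ 0 := (Finset.mem_filter.mp hi).2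
  have hsum := congrFun hc (e i)
  simp only [Finset.sum_apply, Pi.smul_apply, smul_eq_mul, Pi.zero_apply] at hsum
  rw [Finset.sum_eq_single i (fun j _ hji => ?_) (by simp), hpivot, mul_one] at hsum
  · exact hci hsum
  by_contra hcj
  have hcj' : c j ≠ 0 := left_ne_zero_of_mul hcj
  have hvj : v j (e i) ≠ 0 := right_ne_zero_of_mul hcj
  exact absurd (hmax j (by simpa using hcj')) (not_le.mpr (hheight i j hji hvj))

theorem Lmap_single {X O : Type} [Fintype X] [DecidableEq X] [Fintype O] [DecidableEq O]
    (𝒰 : Finset (Finset X)) (k : X → O)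
    (p : Σ U : {U // U ∈ 𝒰}, ({x // x ∈ U.1} → O)) :
    Lmap 𝒰 (Pi.single k 1) p = if restr p.1.1 k = p.2 then 1 else 0 := by
  simp only [Lmap, Pi.single_apply]
  rw [Fintype.sum_eq_single k (fun ω hω => by simp [hω])]
  simp

section OutcomeSupport

variable {X O : Type} [Fintype X] [Zero O] [DecidableEq O]

def outcomeSupport (ω : X → O) : Finset X :=
  {x | ω x ≠ 0}

theorem mem_outcomeSupport {ω : X → O} {x : X} : x ∈ outcomeSupport ω ↔ ω x ≠ 0 := by
  simp [outcomeSupport]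

theorem card_outcomeSupport_eq [DecidableEq X] [Fintype O] (V : Finset X) :
    #{ω : X → O | outcomeSupport ω = V} = (Fintype.card O - 1) ^ #V := by
  have hfiber : ({ω : X → O | outcomeSupport ω = V} : Finset _) =
      Fintype.piFinset fun x => if x ∈ V then {0}ᶜ else {0} := by
    ext ω
    simp only [Finset.mem_filter, Finset.mem_univ, true_and, Fintype.mem_piFinset,
      Finset.ext_iff, mem_outcomeSupport]
    refine forall_congr' fun x => ?_
    split_ifs with hx <;> simp [hx]
  rw [hfiber, Fintype.card_piFinset]
  simp_rw [apply_ite Finset.card, Finset.card_compl, Finset.card_singleton]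
  rw [Finset.prod_ite_mem, Finset.univ_inter, Finset.prod_const]

theorem sum_partialContexts_eq_card [DecidableEq X] [Fintype O] (𝒰 : Finset (Finset X)) :
    ∑ V ∈ Finset.univ.filter (fun V : Finset X => ∃ U ∈ 𝒰, V ⊆ U), (Fintype.card O - 1) ^ #V =
      Fintype.card {ω : X → O // ∃ U ∈ 𝒰, outcomeSupport ω ⊆ U} := by
  rw [Fintype.card_subtype, Finset.card_eq_sum_card_fiberwise (f := outcomeSupport)
    (t := Finset.univ.filter (fun V : Finset X => ∃ U ∈ 𝒰, V ⊆ U)) (fun ω hω => by simpa using hω)]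
  refine Finset.sum_congr rfl fun V hV => ?_
  rw [← card_outcomeSupport_eq V, Finset.filter_filter]
  congr 1
  ext ω
  obtain ⟨U, hU, hVU⟩ := (Finset.mem_filter.mp hV).2
  simp only [Finset.mem_filter, Finset.mem_univ, true_and]
  exact ⟨fun h => ⟨⟨U, hU, h ▸ hVU⟩, h⟩, fun h => h.2⟩

theorem outcomeSupport_ssubset_of_eqOn {U : Finset X} {j k : X → O}
    (hk : outcomeSupport k ⊆ U) (hjk : Set.EqOn j k U) (hne : j ≠ k) :
    outcomeSupport k ⊂ outcomeSupport j := by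
  have hsub : outcomeSupport k ⊆ outcomeSupport j := fun x hx => by
    rw [mem_outcomeSupport, hjk (hk hx)]
    exact mem_outcomeSupport.mp hx
  refine hsub.ssubset_of_ne fun heq => hne (funext fun x => ?_)
  by_cases hx : x ∈ U
  · exact hjk hx
  · have hkx : x ∉ outcomeSupport k := fun h => hx (hk h)
    have hjx : x ∉ outcomeSupport j := heq ▸ hkx
    rw [mem_outcomeSupport, not_not] at hkx hjx
    rw [hjx, hkx]

theorem linearIndependent_Lmap_single [DecidableEq X] [Fintype O] (𝒰 : Finset (Finset X)) :
    LinearIndependent ℝ fun k : {ω : X → O // ∃ U ∈ 𝒰, outcomeSupport ω ⊆ U} =>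
      Lmap 𝒰 (Pi.single k.1 1) := by
  choose U hU hkU using fun k : {ω : X → O // ∃ U ∈ 𝒰, outcomeSupport ω ⊆ U} => k.2
  refine linearIndependent_of_unitriangular _ (fun k => ⟨⟨U k, hU k⟩, restr (U k) k.1⟩)
    (fun k => #(outcomeSupport k.1)) (fun k => by simp [Lmap_single]) fun i j hji hji' => ?_
  have hres : restr (U i) j.1 = restr (U i) i.1 := by
    by_contra h
    simp [Lmap_single, h] at hji'
  refine Finset.card_lt_card (outcomeSupport_ssubset_of_eqOn (hkU i) (fun x hx => ?_)
    (Subtype.coe_ne_coe.mpr hji))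
  exact congrFun hres ⟨x, hx⟩

end OutcomeSupport

/-- the span `V` of the image under `L` of `D±(Ω)` has dimension at
least `D = Σ_{V ∈ Σ} (l-1)^{|V|}`, `Σ` the set of partial contexts. -/
theorem finrank_span_Lmap_ge {X : Type} [Fintype X] [DecidableEq X]
    (l : ℕ) (hl : 0 < l) (𝒰 : Finset (Finset X)) :
    ∑ V ∈ Finset.univ.filter (fun V : Finset X => ∃ U ∈ 𝒰, V ⊆ U), (l - 1) ^ V.card ≤
    Module.finrank ℝ (Submodule.span ℝ
      {w : (Σ U : {U // U ∈ 𝒰}, ({x // x ∈ U.1} → Fin l)) → ℝ |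
        ∃ v : (X → Fin l) → ℝ, (∑ ω : X → Fin l, v ω = 1) ∧ w = Lmap 𝒰 v}) := by
  have : NeZero l := ⟨hl.ne'⟩
  have hcard := sum_partialContexts_eq_card (O := Fin l) 𝒰
  rw [Fintype.card_fin] at hcard
  rw [hcard, ← finrank_span_eq_card (linearIndependent_Lmap_single 𝒰)]
  refine Submodule.finrank_mono (Submodule.span_mono (Set.range_subset_iff.mpr fun k => ?_))
  exact ⟨Pi.single k.1 1, by simp, rfl⟩
end
end

section
/- For each partial context V ∈ Σ and each s ∈ O^V with s never taking the value 1, let ω_{V,s} ∈ Ω be the global assignment agreeing with s on V and equal to 1 outside V, and let v[V,s] := L(δ_{ω_{V,s}}) ∈ ℝ^E, where δ_{ω} is the indicator vector of ω. Then the family of vectors { v[V,s] : V ∈ Σ, s ∈ O^V, 1 ∉ range(s) } is linearly independent in ℝ^E. -/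
open Finset

noncomputable section

lemma Lmap_indicator {X : Type} [Fintype X] [DecidableEq X] {l : ℕ}
    (𝒰 : Finset (Finset X)) (ω₀ : X → Fin l)
    (p : Σ U : {U // U ∈ 𝒰}, ({x // x ∈ U.1} → Fin l)) :
    Lmap 𝒰 (fun ω : X → Fin l => if ω = ω₀ then (1 : ℝ) else 0) p
      = if restr p.1.1 ω₀ = p.2 then 1 else 0 := by
  classical
  unfold Lmap
  rw [Finset.sum_eq_single ω₀]
  · simp
  · intro ω _ hne
    simp [hne]
  · simp

/-- the family of vectors `v[V,s] = L(δ_{ω_{V,s}})`, indexed by partial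
contexts `V` and sections `s` on `V` avoiding the distinguished outcome, is linearly
independent in `ℝ^E`.  Here `⟨0, hl⟩ : Fin l` plays the role of the outcome `1`. -/
theorem linearIndependent_canonical_vectors {X : Type} [Fintype X] [DecidableEq X]
    (l : ℕ) (hl : 0 < l) (𝒰 : Finset (Finset X)) :
    LinearIndependent ℝ
      (fun p : (Σ V : {V : Finset X // ∃ U ∈ 𝒰, V ⊆ U},
          {s : {x // x ∈ V.1} → Fin l // ∀ x, s x ≠ ⟨0, hl⟩}) =>
        Lmap 𝒰 (fun ω : X → Fin l =>
          if ω = (fun x => if hx : x ∈ p.1.1 then p.2.1 ⟨x, hx⟩ else ⟨0, hl⟩)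
            then (1 : ℝ) else 0)) := by
  classical
  rw [Fintype.linearIndependent_iff]
  intro g hg
  by_contra hcon
  push_neg at hcon
  obtain ⟨p₀, hp₀⟩ := hcon
  obtain ⟨p, hpmem, hmax⟩ := Finset.exists_max_image
    (Finset.univ.filter fun p => g p ≠ 0) (fun p => p.1.1.card)
    ⟨p₀, by simp [hp₀]⟩
  obtain ⟨⟨V, hV⟩, s, hs⟩ := p
  have hgp : g ⟨⟨V, hV⟩, ⟨s, hs⟩⟩ ≠ 0 := (Finset.mem_filter.mp hpmem).2
  obtain ⟨U, hU, hVU⟩ := hV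
  set ω₀ : X → Fin l := fun x => if hx : x ∈ V then s ⟨x, hx⟩ else ⟨0, hl⟩ with hω₀
  have key := congrFun hg ⟨⟨U, hU⟩, restr U ω₀⟩
  simp only [Finset.sum_apply, Pi.smul_apply, smul_eq_mul, Pi.zero_apply,
    Lmap_indicator] at key
  have hsum : (∑ p' : (Σ V : {V : Finset X // ∃ U ∈ 𝒰, V ⊆ U},
        {s : {x // x ∈ V.1} → Fin l // ∀ x, s x ≠ ⟨0, hl⟩}),
      g p' * (if restr U (fun x => if hx : x ∈ p'.1.1 then p'.2.1 ⟨x, hx⟩ else ⟨0, hl⟩)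
          = restr U ω₀ then (1:ℝ) else 0))
      = g ⟨⟨V, ⟨U, hU, hVU⟩⟩, ⟨s, hs⟩⟩ := by
    rw [Finset.sum_eq_single (⟨⟨V, ⟨U, hU, hVU⟩⟩, ⟨s, hs⟩⟩ : (Σ V : {V : Finset X // ∃ U ∈ 𝒰, V ⊆ U},
        {s : {x // x ∈ V.1} → Fin l // ∀ x, s x ≠ ⟨0, hl⟩}))]
    · rw [← hω₀, if_pos rfl, mul_one]
    · rintro ⟨⟨V', hV'⟩, s', hs'⟩ _ hne
      by_cases h0 : g ⟨⟨V', hV'⟩, ⟨s', hs'⟩⟩ = 0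
      · rw [h0, zero_mul]
      by_cases hres : restr U (fun x => if hx : x ∈ V' then s' ⟨x, hx⟩ else ⟨0, hl⟩)
          = restr U ω₀
      · exfalso
        apply hne
        have hcard : V'.card ≤ V.card :=
          hmax ⟨⟨V', hV'⟩, ⟨s', hs'⟩⟩ (Finset.mem_filter.mpr ⟨Finset.mem_univ _, h0⟩)
        have hsub : V ⊆ V' := by
          intro x hx
          by_contra hxV'
          have h1 := congrFun hres ⟨x, hVU hx⟩
          simp only [restr, hω₀, dif_pos hx, dif_neg hxV'] at h1
          exact hs ⟨x, hx⟩ h1.symm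
        have hVV' : V' = V := (Finset.eq_of_subset_of_card_le hsub hcard).symm
        subst hVV'
        have hss' : s' = s := by
          funext x
          have h1 := congrFun hres ⟨x.1, hVU x.2⟩
          simpa only [restr, hω₀, dif_pos x.2] using h1
        subst hss'
        rfl
      · rw [if_neg hres, mul_zero]
    · exact fun h => absurd (Finset.mem_univ _) h
  rw [hsum] at key
  exact hgp key
end
end

section
/- The subspaces V and W of ℝ^E are equal, where W is the span of vectors induced by No-Signalling empirical models and V is the span of the image under L of D±(Ω). -/
open Finset

noncomputable section

/-!
`L` is linear, so `V` is spanned by the vectors `L δ_ω`; each of them is induced by the empirical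
model of the deterministic assignment `ω`, which is No-Signalling because a marginal of a marginal
is a marginal. Hence `V ⊆ W`. Conversely, a No-Signalling family of conditionals is the family of
marginals of one signed table on global assignments, so it lies in the image of `L`, which is `V`.
Such a table is built by adding the contexts one at a time: the defect on a new context `U₀` has
zero marginal on every overlap `U₀ ∩ U`, so pushing it to the assignments that take a fixed outcome
off `U₀` corrects `U₀` without disturbing the earlier contexts.
-/

section FiberSum

variable {α β γ M : Type*} [Fintype α] [DecidableEq β] [AddCommMonoid M]

def fiberSum (π : α → β) (f : α → M) (b : β) : M :=
  ∑ a, if π a = b then f a else 0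

lemma fiberSum_id [DecidableEq α] (f : α → M) : fiberSum id f = f := by
  funext a
  simp [fiberSum]

lemma fiberSum_zero (π : α → β) : fiberSum π (0 : α → M) = 0 := by
  funext b
  simp [fiberSum]

lemma fiberSum_add (π : α → β) (f g : α → M) :
    fiberSum π (f + g) = fiberSum π f + fiberSum π g := by
  funext b
  simp only [fiberSum, Pi.add_apply, ← Finset.sum_add_distrib]
  exact Finset.sum_congr rfl fun a _ => by split_ifs <;> simp

lemma fiberSum_sub {M : Type*} [AddCommGroup M] (π : α → β) (f g : α → M) :
    fiberSum π (f - g) = fiberSum π f - fiberSum π g := by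
  funext b
  simp only [fiberSum, Pi.sub_apply, ← Finset.sum_sub_distrib]
  exact Finset.sum_congr rfl fun a _ => by split_ifs <;> simp

lemma fiberSum_comp [Fintype β] [DecidableEq γ] (π : α → β) (g : β → γ) (f : α → M) :
    fiberSum g (fiberSum π f) = fiberSum (g ∘ π) f := by
  funext c
  simp only [fiberSum, Function.comp_apply]
  have (a : α) : (if g (π a) = c then f a else 0) =
      ∑ b, if π a = b then (if g b = c then f a else 0) else 0 := by
    simp
  simp_rw [this, Finset.ite_sum_zero]
  rw [Finset.sum_comm]
  refine Finset.sum_congr rfl fun b _ => Finset.sum_congr rfl fun a _ => ?_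
  split_ifs <;> rfl

lemma sum_fiberSum [Fintype β] (π : α → β) (f : α → M) :
    ∑ b, fiberSum π f b = ∑ a, f a := by
  simp only [fiberSum]
  rw [Finset.sum_comm]
  simp

end FiberSum

section Realization

variable {X O : Type} [DecidableEq X]

def extendBy (o₀ : O) (V : Finset X) (t : {x // x ∈ V} → O) : X → O :=
  fun x => if h : x ∈ V then t ⟨x, h⟩ else o₀

lemma restr_comp_extendBy (o₀ : O) (V : Finset X) : restr V ∘ extendBy o₀ V = id :=
  funext fun _ => funext fun x => dif_pos x.2

lemma restr_comp_extendBy_inter (o₀ : O) (V U : Finset X) :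
    restr U ∘ extendBy o₀ V =
      (restr U ∘ extendBy o₀ (V ∩ U)) ∘ restrSec Finset.inter_subset_left := by
  funext t x
  obtain ⟨x, hx⟩ := x
  by_cases hxV : x ∈ V <;> simp [restr, extendBy, restrSec, hxV, hx]

variable [Fintype X] [Fintype O] [DecidableEq O] {M : Type*} [AddCommGroup M]

lemma fiberSum_restr_extendBy_self (o₀ : O) (V : Finset X) (δ : ({x // x ∈ V} → O) → M) :
    fiberSum (restr V) (fiberSum (extendBy o₀ V) δ) = δ := by
  rw [fiberSum_comp, restr_comp_extendBy, fiberSum_id]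

lemma fiberSum_restr_extendBy_eq_zero (o₀ : O) {V : Finset X} (U : Finset X)
    {δ : ({x // x ∈ V} → O) → M}
    (hδ : fiberSum (restrSec (Finset.inter_subset_left : V ∩ U ⊆ V)) δ = 0) :
    fiberSum (restr U) (fiberSum (extendBy o₀ V) δ) = 0 := by
  rw [fiberSum_comp, restr_comp_extendBy_inter, ← fiberSum_comp, hδ, fiberSum_zero]

lemma fiberSum_restrSec_restr {U V : Finset X} (h : V ⊆ U) (d : (X → O) → M) :
    fiberSum (restrSec h) (fiberSum (restr U) d) = fiberSum (restr V) d :=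
  fiberSum_comp _ _ d

theorem exists_fiberSum_restr_eq_of_compatible (o₀ : O) (𝒰 : Finset (Finset X))
    (f : (U : Finset X) → ({x // x ∈ U} → O) → M)
    (hf : ∀ U ∈ 𝒰, ∀ U' ∈ 𝒰, fiberSum (restrSec Finset.inter_subset_left) (f U) =
      fiberSum (restrSec (Finset.inter_subset_right : U ∩ U' ⊆ U')) (f U')) :
    ∃ d : (X → O) → M, ∀ U ∈ 𝒰, fiberSum (restr U) d = f U := by
  induction 𝒰 using Finset.induction_on with
  | empty => exact ⟨0, by simp⟩
  | @insert U₀ 𝒰 _ ih =>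
    obtain ⟨d, hd⟩ := ih fun U hU U' hU' =>
      hf U (Finset.mem_insert_of_mem hU) U' (Finset.mem_insert_of_mem hU')
    set δ := f U₀ - fiberSum (restr U₀) d
    refine ⟨d + fiberSum (extendBy o₀ U₀) δ, fun U hU => ?_⟩
    rw [fiberSum_add]
    rcases Finset.mem_insert.mp hU with rfl | hU
    · rw [fiberSum_restr_extendBy_self, add_sub_cancel]
    · have hδ : fiberSum (restrSec (Finset.inter_subset_left : U₀ ∩ U ⊆ U₀)) δ = 0 := by
        rw [fiberSum_sub, fiberSum_restrSec_restr, hf U₀ (Finset.mem_insert_self _ _) U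
          (Finset.mem_insert_of_mem hU), ← hd U hU, fiberSum_restrSec_restr, sub_self]
      rw [fiberSum_restr_extendBy_eq_zero o₀ U hδ, add_zero, hd U hU]

end Realization

section Models

variable {X O : Type} [Fintype X] [DecidableEq X] [Fintype O] [DecidableEq O]
  {𝒰 : Finset (Finset X)}

lemma Lmap_eq_sum_smul_single (d : (X → O) → ℝ) :
    Lmap 𝒰 d = ∑ ω, d ω • Lmap 𝒰 (Pi.single ω 1) := by
  funext p
  simp only [Lmap, Finset.sum_apply, Pi.smul_apply, smul_eq_mul, Finset.mul_sum, mul_ite,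
    mul_zero]
  rw [Finset.sum_comm]
  refine Finset.sum_congr rfl fun ω _ => ?_
  split_ifs <;> simp [Pi.single_apply]

lemma Lmap_mem_of_forall_single_mem
    {S : Submodule ℝ ((Σ U : {U // U ∈ 𝒰}, ({x // x ∈ U.1} → O)) → ℝ)}
    (hS : ∀ ω, Lmap 𝒰 (Pi.single ω 1) ∈ S) (d : (X → O) → ℝ) : Lmap 𝒰 d ∈ S := by
  rw [Lmap_eq_sum_smul_single]
  exact S.sum_mem fun ω _ => S.smul_mem _ (hS ω)

lemma noSignalling_of_eCond_eq_fiberSum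
    {e : (U : {U // U ∈ 𝒰}) → ({x // x ∈ U.1} → O) → ℝ} (d : (X → O) → ℝ)
    (he : ∀ U, eCond 𝒰 e U = fiberSum (restr U.1) d) :
    NoSignalling 𝒰 e := by
  intro U U' s
  change fiberSum _ (eCond 𝒰 e U) s = fiberSum _ (eCond 𝒰 e U') s
  rw [he, he, fiberSum_restrSec_restr, fiberSum_restrSec_restr]

lemma exists_indVec_eq_Lmap_of_noSignalling (o₀ : O)
    {e : (U : {U // U ∈ 𝒰}) → ({x // x ∈ U.1} → O) → ℝ} (he : NoSignalling 𝒰 e) :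
    ∃ d, indVec 𝒰 e = Lmap 𝒰 d := by
  obtain ⟨d, hd⟩ := exists_fiberSum_restr_eq_of_compatible o₀ 𝒰
    (fun U => if hU : U ∈ 𝒰 then eCond 𝒰 e ⟨U, hU⟩ else 0) (by
      intro U hU U' hU'
      simp only [dif_pos hU, dif_pos hU']
      exact funext (he ⟨U, hU⟩ ⟨U', hU'⟩))
  refine ⟨d, funext fun p => ?_⟩
  have hp := congrFun (hd p.1.1 p.1.2) p.2
  rw [dif_pos p.1.2] at hp
  exact hp.symm

def tableOfGlobal (𝒰 : Finset (Finset X)) (v : (X → O) → ℝ) :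
    (U : {U // U ∈ 𝒰}) → ({x // x ∈ U.1} → O) → ℝ :=
  fun U s => fiberSum (restr U.1) v s / 𝒰.card

lemma eCtx_tableOfGlobal (v : (X → O) → ℝ) (U : {U // U ∈ 𝒰}) :
    eCtx 𝒰 (tableOfGlobal 𝒰 v) U = (∑ ω, v ω) / 𝒰.card := by
  simp only [eCtx, tableOfGlobal]
  rw [← Finset.sum_div, sum_fiberSum]

variable {v : (X → O) → ℝ}

lemma eCond_tableOfGlobal (hv : ∑ ω, v ω = 1) (h𝒰 : 𝒰.Nonempty) (U : {U // U ∈ 𝒰}) :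
    eCond 𝒰 (tableOfGlobal 𝒰 v) U = fiberSum (restr U.1) v := by
  funext s
  have : (𝒰.card : ℝ) ≠ 0 := by exact_mod_cast h𝒰.card_pos.ne'
  rw [eCond, eCtx_tableOfGlobal, hv]
  simp only [tableOfGlobal]
  field_simp

lemma isEmpirical_tableOfGlobal (hv₀ : 0 ≤ v) (hv : ∑ ω, v ω = 1) (h𝒰 : 𝒰.Nonempty) :
    IsEmpirical 𝒰 (tableOfGlobal 𝒰 v) := by
  have hcard : (0 : ℝ) < 𝒰.card := by exact_mod_cast h𝒰.card_pos
  refine ⟨fun U s => ?_, ?_, fun U => ?_⟩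
  · refine div_nonneg (Finset.sum_nonneg fun ω _ => ?_) hcard.le
    split_ifs
    exacts [hv₀ ω, le_rfl]
  · simp [eCtx_tableOfGlobal, hv, hcard.ne']
  · rw [eCtx_tableOfGlobal, hv]
    positivity

lemma exists_noSignalling_indVec_eq_Lmap (hv₀ : 0 ≤ v) (hv : ∑ ω, v ω = 1)
    (h𝒰 : 𝒰.Nonempty) :
    ∃ e, IsEmpirical 𝒰 e ∧ NoSignalling 𝒰 e ∧ Lmap 𝒰 v = indVec 𝒰 e :=
  ⟨tableOfGlobal 𝒰 v, isEmpirical_tableOfGlobal hv₀ hv h𝒰,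
    noSignalling_of_eCond_eq_fiberSum v (eCond_tableOfGlobal hv h𝒰),
    funext fun p => (congrFun (eCond_tableOfGlobal hv h𝒰 p.1) p.2).symm⟩

end Models

/-- the span `V` of the image under `L` of `D±(Ω)` equals the span `W`
of the vectors induced by No-Signalling empirical models. -/
theorem span_Lmap_eq_span_noSignalling {X : Type} [Fintype X] [DecidableEq X]
    (l : ℕ) (hl : 0 < l) (𝒰 : Finset (Finset X)) :
    Submodule.span ℝ
      {w : (Σ U : {U // U ∈ 𝒰}, ({x // x ∈ U.1} → Fin l)) → ℝ |
        ∃ v : (X → Fin l) → ℝ, (∑ ω : X → Fin l, v ω = 1) ∧ w = Lmap 𝒰 v} =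
    Submodule.span ℝ
      {w : (Σ U : {U // U ∈ 𝒰}, ({x // x ∈ U.1} → Fin l)) → ℝ |
        ∃ e : (U : {U // U ∈ 𝒰}) → ({x // x ∈ U.1} → Fin l) → ℝ,
          IsEmpirical 𝒰 e ∧ NoSignalling 𝒰 e ∧ w = indVec 𝒰 e} := by
  apply le_antisymm <;> rw [Submodule.span_le]
  · rintro _ ⟨v, -, rfl⟩
    refine Lmap_mem_of_forall_single_mem (fun ω => ?_) v
    rcases 𝒰.eq_empty_or_nonempty with rfl | h𝒰
    · rw [Subsingleton.elim (Lmap ∅ _) 0]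
      exact zero_mem _
    · obtain ⟨e, he, hns, hLe⟩ := exists_noSignalling_indVec_eq_Lmap
        (v := Pi.single ω 1) (Pi.single_nonneg.mpr zero_le_one) (by simp) h𝒰
      exact Submodule.subset_span ⟨e, he, hns, hLe⟩
  · rintro _ ⟨e, -, hns, rfl⟩
    obtain ⟨d, hd⟩ := exists_indVec_eq_Lmap_of_noSignalling (⟨0, hl⟩ : Fin l) hns
    rw [SetLike.mem_coe, hd]
    refine Lmap_mem_of_forall_single_mem (fun ω => Submodule.subset_span ?_) d
    exact ⟨_, by simp, rfl⟩
end
end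

section
/- Let w ∈ ℝ^E be the vector induced by a No-Signalling empirical model e (i.e. w_{(U,s)} = e_U(s)). Then there exists v ∈ D±(Ω) with L(v) = w. -/
open Finset

noncomputable section

section AuxNS

variable {X : Type} [Fintype X] [DecidableEq X] {l : ℕ}
variable (𝒰 : Finset (Finset X))
variable (e : (U : {U // U ∈ 𝒰}) → ({x // x ∈ U.1} → Fin l) → ℝ)

/-- Marginal of the conditional distribution `eCond U` to a subset `W ⊆ U`. -/
def dm (W : Finset X) (U : {U // U ∈ 𝒰}) (h : W ⊆ U.1) (s : {x // x ∈ W} → Fin l) : ℝ :=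
  ∑ t : {x // x ∈ U.1} → Fin l, if restrSec h t = s then eCond 𝒰 e U t else 0

lemma dm_group {W V : Finset X} (U : {U // U ∈ 𝒰}) (hWV : W ⊆ V) (hVU : V ⊆ U.1)
    (hWU : W ⊆ U.1) (s : {x // x ∈ W} → Fin l) :
    dm 𝒰 e W U hWU s =
      ∑ t' : {x // x ∈ V} → Fin l, if restrSec hWV t' = s then dm 𝒰 e V U hVU t' else 0 := by
  classical
  have key : ∀ t : {x // x ∈ U.1} → Fin l,
      (∑ t' : {x // x ∈ V} → Fin l, if restrSec hVU t = t' then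
        (if restrSec hWV t' = s then eCond 𝒰 e U t else 0) else 0)
      = (if restrSec hWU t = s then eCond 𝒰 e U t else 0) := by
    intro t
    rw [Fintype.sum_ite_eq]
    have h12 : restrSec hWV (restrSec hVU t) = restrSec hWU t := rfl
    rw [h12]
  calc dm 𝒰 e W U hWU s
      = ∑ t : {x // x ∈ U.1} → Fin l, ∑ t' : {x // x ∈ V} → Fin l,
          if restrSec hVU t = t' then
            (if restrSec hWV t' = s then eCond 𝒰 e U t else 0) else 0 := by
        unfold dm
        exact Finset.sum_congr rfl fun t _ => (key t).symm
    _ = ∑ t' : {x // x ∈ V} → Fin l, ∑ t : {x // x ∈ U.1} → Fin l,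
          if restrSec hVU t = t' then
            (if restrSec hWV t' = s then eCond 𝒰 e U t else 0) else 0 := Finset.sum_comm
    _ = ∑ t' : {x // x ∈ V} → Fin l, if restrSec hWV t' = s then dm 𝒰 e V U hVU t' else 0 := by
        refine Finset.sum_congr rfl fun t' _ => ?_
        unfold dm
        by_cases h1 : restrSec hWV t' = s
        · simp only [h1, if_true]
        · simp only [h1, if_false]
          refine Finset.sum_eq_zero fun t _ => ?_
          by_cases h2 : restrSec hVU t = t' <;> simp [h2]

lemma dm_ns (hns : NoSignalling 𝒰 e) {W : Finset X} (U U' : {U // U ∈ 𝒰})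
    (h : W ⊆ U.1) (h' : W ⊆ U'.1) (s : {x // x ∈ W} → Fin l) :
    dm 𝒰 e W U h s = dm 𝒰 e W U' h' s := by
  classical
  have hWI : W ⊆ U.1 ∩ U'.1 := Finset.subset_inter h h'
  rw [dm_group 𝒰 e U hWI Finset.inter_subset_left h s,
      dm_group 𝒰 e U' hWI Finset.inter_subset_right h' s]
  refine Finset.sum_congr rfl fun t'' _ => ?_
  by_cases hc : restrSec hWI t'' = s
  · simp only [hc, if_true]
    have := hns U U' t''
    unfold dm
    exact this
  · simp only [hc, if_false]

lemma dm_self (U : {U // U ∈ 𝒰}) (s : {x // x ∈ U.1} → Fin l) :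
    dm 𝒰 e U.1 U (Finset.Subset.refl _) s = eCond 𝒰 e U s := by
  unfold dm
  have hres : ∀ t : {x // x ∈ U.1} → Fin l, restrSec (Finset.Subset.refl U.1) t = t :=
    fun t => rfl
  simp only [hres]
  exact Fintype.sum_ite_eq' s _

lemma dm_congrA (U : {U // U ∈ 𝒰}) {A₁ A₂ : Finset X} (hA : A₁ = A₂)
    (h₁ : A₁ ⊆ U.1) (h₂ : A₂ ⊆ U.1) (s : {x // x ∈ U.1} → Fin l) :
    dm 𝒰 e A₁ U h₁ (restrSec h₁ s) = dm 𝒰 e A₂ U h₂ (restrSec h₂ s) := by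
  subst hA; rfl

/-- Extend a section on `W` by the constant `z` outside `W`. -/
def extz (W : Finset X) (z : Fin l) (t : {x // x ∈ W} → Fin l) : X → Fin l :=
  fun x => if h : x ∈ W then t ⟨x, h⟩ else z

lemma restr_extz (W : Finset X) (z : Fin l) (t : {x // x ∈ W} → Fin l) :
    restr W (extz W z t) = t := by
  funext x
  show (if h : x.1 ∈ W then t ⟨x.1, h⟩ else z) = t x
  rw [dif_pos x.2]

lemma sum_extz (W : Finset X) (z : Fin l) (g : (X → Fin l) → ℝ) :
    (∑ ω : X → Fin l, if ∀ x, x ∉ W → ω x = z then g ω else 0)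
      = ∑ t : {x // x ∈ W} → Fin l, g (extz W z t) := by
  classical
  rw [Finset.sum_ite, Finset.sum_const_zero, add_zero]
  refine Finset.sum_bij' (fun ω _ => restr W ω) (fun t _ => extz W z t) ?_ ?_ ?_ ?_ ?_
  · intro ω hω; exact Finset.mem_univ _
  · intro t ht
    simp only [Finset.mem_filter, Finset.mem_univ, true_and]
    intro x hx
    exact dif_neg hx
  · intro ω hω
    simp only [Finset.mem_filter, Finset.mem_univ, true_and] at hω
    funext x
    show (if h : x ∈ W then ω x else z) = ω x
    by_cases hx : x ∈ W
    · rw [dif_pos hx]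
    · rw [dif_neg hx]; exact (hω x hx).symm
  · intro t ht; exact restr_extz W z t
  · intro ω hω
    simp only [Finset.mem_filter, Finset.mem_univ, true_and] at hω
    congr 1
    funext x
    show ω x = (if h : x ∈ W then ω x else z)
    by_cases hx : x ∈ W
    · rw [dif_pos hx]
    · rw [dif_neg hx]; exact hω x hx

/-- The single-`S` summand of the hidden-variable construction. -/
def piece (W : Finset X) (U₀ : {U // U ∈ 𝒰}) (h : W ⊆ U₀.1) (z : Fin l)
    (ω : X → Fin l) : ℝ :=
  if ∀ x, x ∉ W → ω x = z then dm 𝒰 e W U₀ h (restr W ω) else 0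

lemma piece_marg (hns : NoSignalling 𝒰 e) (W : Finset X) (U₀ : {U // U ∈ 𝒰})
    (hW : W ⊆ U₀.1) (z : Fin l) (U : {U // U ∈ 𝒰}) (s : {x // x ∈ U.1} → Fin l) :
    (∑ ω : X → Fin l, if restr U.1 ω = s then piece 𝒰 e W U₀ hW z ω else 0)
    = if ∀ x : {x // x ∈ U.1}, x.1 ∉ W → s x = z
        then dm 𝒰 e (W ∩ U.1) U Finset.inter_subset_right
          (restrSec Finset.inter_subset_right s)
        else 0 := by
  classical
  have step1 : (∑ ω : X → Fin l, if restr U.1 ω = s then piece 𝒰 e W U₀ hW z ω else 0)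
      = ∑ ω : X → Fin l, if ∀ x, x ∉ W → ω x = z then
          (if restr U.1 ω = s then dm 𝒰 e W U₀ hW (restr W ω) else 0) else 0 := by
    refine Finset.sum_congr rfl fun ω _ => ?_
    unfold piece
    by_cases h1 : restr U.1 ω = s <;> by_cases h2 : ∀ x, x ∉ W → ω x = z <;>
      simp [h1, h2]
  rw [step1, sum_extz]
  have step2 : ∀ t : {x // x ∈ W} → Fin l,
      (if restr U.1 (extz W z t) = s then dm 𝒰 e W U₀ hW (restr W (extz W z t)) else 0)
      = if (restrSec (Finset.inter_subset_left : W ∩ U.1 ⊆ W) t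
              = restrSec (Finset.inter_subset_right : W ∩ U.1 ⊆ U.1) s)
            ∧ (∀ x : {x // x ∈ U.1}, x.1 ∉ W → s x = z)
          then dm 𝒰 e W U₀ hW t else 0 := by
    intro t
    rw [restr_extz]
    have hiff : (restr U.1 (extz W z t) = s) ↔
        ((restrSec (Finset.inter_subset_left : W ∩ U.1 ⊆ W) t
            = restrSec (Finset.inter_subset_right : W ∩ U.1 ⊆ U.1) s)
          ∧ (∀ x : {x // x ∈ U.1}, x.1 ∉ W → s x = z)) := by
      constructor
      · intro h
        constructor
        · funext x
          have hx1 : x.1 ∈ W := (Finset.mem_inter.mp x.2).1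
          have := congrFun h ⟨x.1, (Finset.mem_inter.mp x.2).2⟩
          show t ⟨x.1, _⟩ = s ⟨x.1, _⟩
          rw [← this]
          show t _ = (if h : x.1 ∈ W then t ⟨x.1, h⟩ else z)
          rw [dif_pos hx1]
        · intro x hx
          have := congrFun h x
          rw [← this]
          show (if h : x.1 ∈ W then t ⟨x.1, h⟩ else z) = z
          rw [dif_neg hx]
      · rintro ⟨h1, h2⟩
        funext x
        show (if h : x.1 ∈ W then t ⟨x.1, h⟩ else z) = s x
        by_cases hx : x.1 ∈ W
        · rw [dif_pos hx]
          have := congrFun h1 ⟨x.1, Finset.mem_inter.mpr ⟨hx, x.2⟩⟩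
          exact this
        · rw [dif_neg hx]
          exact (h2 x hx).symm
    by_cases hc : restr U.1 (extz W z t) = s
    · rw [if_pos hc, if_pos (hiff.mp hc)]
    · rw [if_neg hc, if_neg (fun hh => hc (hiff.mpr hh))]
  rw [Finset.sum_congr rfl fun t _ => step2 t]
  by_cases hQ : ∀ x : {x // x ∈ U.1}, x.1 ∉ W → s x = z
  · rw [if_pos hQ]
    have : (∑ t : {x // x ∈ W} → Fin l,
        if (restrSec (Finset.inter_subset_left : W ∩ U.1 ⊆ W) t
              = restrSec (Finset.inter_subset_right : W ∩ U.1 ⊆ U.1) s)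
            ∧ (∀ x : {x // x ∈ U.1}, x.1 ∉ W → s x = z)
          then dm 𝒰 e W U₀ hW t else 0)
        = ∑ t : {x // x ∈ W} → Fin l,
          if restrSec (Finset.inter_subset_left : W ∩ U.1 ⊆ W) t
              = restrSec (Finset.inter_subset_right : W ∩ U.1 ⊆ U.1) s
            then dm 𝒰 e W U₀ hW t else 0 := by
      refine Finset.sum_congr rfl fun t _ => ?_
      by_cases h1 : restrSec (Finset.inter_subset_left : W ∩ U.1 ⊆ W) t
          = restrSec (Finset.inter_subset_right : W ∩ U.1 ⊆ U.1) s
      · rw [if_pos (⟨h1, hQ⟩ : _ ∧ _), if_pos h1]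
      · rw [if_neg (fun hh => h1 hh.1), if_neg h1]
    rw [this, ← dm_group 𝒰 e U₀ Finset.inter_subset_left hW
      (Finset.Subset.trans Finset.inter_subset_left hW)]
    exact dm_ns 𝒰 e hns U₀ U _ _ _
  · rw [if_neg hQ]
    refine Finset.sum_eq_zero fun t _ => ?_
    rw [if_neg (fun hh => hQ hh.2)]

/-- The value used in the cancellation argument. -/
def gfun (z : Fin l) (U : {U // U ∈ 𝒰}) (s : {x // x ∈ U.1} → Fin l) (W : Finset X) : ℝ :=
  if ∀ x : {x // x ∈ U.1}, x.1 ∉ W → s x = z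
    then dm 𝒰 e (W ∩ U.1) U Finset.inter_subset_right
      (restrSec Finset.inter_subset_right s)
    else 0

lemma gfun_congr (z : Fin l) (U : {U // U ∈ 𝒰}) (s : {x // x ∈ U.1} → Fin l)
    {W₁ W₂ : Finset X} (h : W₁ ∩ U.1 = W₂ ∩ U.1) :
    gfun 𝒰 e z U s W₁ = gfun 𝒰 e z U s W₂ := by
  classical
  have hmem : ∀ x : {x // x ∈ U.1}, (x.1 ∈ W₁ ↔ x.1 ∈ W₂) := by
    intro x
    constructor <;> intro hx
    · have : x.1 ∈ W₂ ∩ U.1 := h ▸ Finset.mem_inter.mpr ⟨hx, x.2⟩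
      exact (Finset.mem_inter.mp this).1
    · have : x.1 ∈ W₁ ∩ U.1 := h ▸ Finset.mem_inter.mpr ⟨hx, x.2⟩
      exact (Finset.mem_inter.mp this).1
  have hc : (∀ x : {x // x ∈ U.1}, x.1 ∉ W₁ → s x = z)
      ↔ (∀ x : {x // x ∈ U.1}, x.1 ∉ W₂ → s x = z) := by
    constructor <;> intro hh x hx
    · exact hh x (fun hm => hx ((hmem x).mp hm))
    · exact hh x (fun hm => hx ((hmem x).mpr hm))
  unfold gfun
  by_cases h2 : ∀ x : {x // x ∈ U.1}, x.1 ∉ W₂ → s x = z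
  · rw [if_pos (hc.mpr h2), if_pos h2]
    exact dm_congrA 𝒰 e U h _ _ s
  · rw [if_neg (fun h1 => h2 (hc.mp h1)), if_neg h2]

end AuxNS


section AuxNS2

variable {X : Type} [Fintype X] [DecidableEq X] {l : ℕ}
variable (𝒰 : Finset (Finset X))
variable (e : (U : {U // U ∈ 𝒰}) → ({x // x ∈ U.1} → Fin l) → ℝ)

/-- The `S`-indexed family of signed summands of the global signed measure. -/
def pieceS (hl : 0 < l) (S : Finset (Finset X)) (ω : X → Fin l) : ℝ :=
  if h : S.Nonempty ∧ S ⊆ 𝒰 then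
    (-1 : ℝ) ^ (S.card + 1) *
      piece 𝒰 e (S.inf id) ⟨h.1.choose, h.2 h.1.choose_spec⟩
        (Finset.le_iff_subset.mp (Finset.inf_le h.1.choose_spec)) ⟨0, hl⟩ ω
  else 0

lemma pieceS_marg (hl : 0 < l) (hns : NoSignalling 𝒰 e) (U : {U // U ∈ 𝒰})
    (s : {x // x ∈ U.1} → Fin l) (S : Finset (Finset X)) (hS𝒰 : S ⊆ 𝒰) :
    (∑ ω : X → Fin l, if restr U.1 ω = s then pieceS 𝒰 e hl S ω else 0)
    = if S.Nonempty then
        (-1 : ℝ) ^ (S.card + 1) * gfun 𝒰 e ⟨0, hl⟩ U s (S.inf id)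
      else 0 := by
  classical
  by_cases hne : S.Nonempty
  · rw [if_pos hne]
    have h : S.Nonempty ∧ S ⊆ 𝒰 := ⟨hne, hS𝒰⟩
    have hdef : ∀ ω : X → Fin l, pieceS 𝒰 e hl S ω =
        (-1 : ℝ) ^ (S.card + 1) *
          piece 𝒰 e (S.inf id) ⟨h.1.choose, h.2 h.1.choose_spec⟩
            (Finset.le_iff_subset.mp (Finset.inf_le h.1.choose_spec)) ⟨0, hl⟩ ω :=
      fun ω => dif_pos h
    have step : (∑ ω : X → Fin l, if restr U.1 ω = s then pieceS 𝒰 e hl S ω else 0)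
        = (-1 : ℝ) ^ (S.card + 1) * ∑ ω : X → Fin l,
            if restr U.1 ω = s then
              piece 𝒰 e (S.inf id) ⟨h.1.choose, h.2 h.1.choose_spec⟩
                (Finset.le_iff_subset.mp (Finset.inf_le h.1.choose_spec)) ⟨0, hl⟩ ω
            else 0 := by
      rw [Finset.mul_sum]
      refine Finset.sum_congr rfl fun ω _ => ?_
      rw [hdef ω, mul_ite, mul_zero]
    rw [step, piece_marg 𝒰 e hns]
    rfl
  · rw [if_neg hne]
    refine Finset.sum_eq_zero fun ω _ => ?_
    have : pieceS 𝒰 e hl S ω = 0 := dif_neg (fun hh => hne hh.1)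
    rw [this, ite_self]

lemma gfun_univ (z : Fin l) (U : {U // U ∈ 𝒰}) (s : {x // x ∈ U.1} → Fin l) :
    gfun 𝒰 e z U s Finset.univ = eCond 𝒰 e U s := by
  unfold gfun
  rw [if_pos (fun (x : {x // x ∈ U.1}) hx => absurd (Finset.mem_univ x.1) hx)]
  have h1 : Finset.univ ∩ U.1 = U.1 := Finset.univ_inter _
  rw [dm_congrA 𝒰 e U h1 Finset.inter_subset_right (Finset.Subset.refl _) s]
  have h2 : restrSec (Finset.Subset.refl U.1) s = s := rfl
  rw [h2, dm_self]

lemma sum_gfun (z : Fin l) (U : {U // U ∈ 𝒰}) (s : {x // x ∈ U.1} → Fin l) :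
    (∑ S ∈ 𝒰.powerset,
        if S.Nonempty then (-1 : ℝ) ^ (S.card + 1) * gfun 𝒰 e z U s (S.inf id) else 0)
    = gfun 𝒰 e z U s Finset.univ := by
  classical
  have h1 : 𝒰.powerset = (insert U.1 (𝒰.erase U.1)).powerset := by
    rw [Finset.insert_erase U.2]
  rw [h1, Finset.sum_powerset_insert (Finset.notMem_erase _ _), ← Finset.sum_add_distrib]
  have key : ∀ S ∈ (𝒰.erase U.1).powerset,
      ((if S.Nonempty then (-1 : ℝ) ^ (S.card + 1) * gfun 𝒰 e z U s (S.inf id) else 0)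
        + (if (insert U.1 S).Nonempty then
            (-1 : ℝ) ^ ((insert U.1 S).card + 1) * gfun 𝒰 e z U s ((insert U.1 S).inf id)
          else 0))
      = if S = ∅ then gfun 𝒰 e z U s Finset.univ else 0 := by
    intro S hS
    have hUS : U.1 ∉ S := fun h =>
      (Finset.mem_erase.mp (Finset.mem_powerset.mp hS h)).1 rfl
    have hins : (insert U.1 S).inf id ∩ U.1 = S.inf id ∩ U.1 := by
      rw [Finset.inf_insert]
      show (id U.1 ⊓ S.inf id) ∩ U.1 = S.inf id ∩ U.1
      ext x
      simp only [Finset.inf_eq_inter, Finset.mem_inter, id_eq]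
      tauto
    have hg : gfun 𝒰 e z U s ((insert U.1 S).inf id) = gfun 𝒰 e z U s (S.inf id) :=
      gfun_congr 𝒰 e z U s hins
    have hcard : (insert U.1 S).card = S.card + 1 := Finset.card_insert_of_notMem hUS
    by_cases hne : S.Nonempty
    · rw [if_pos hne, if_pos (Finset.insert_nonempty _ _), hg, hcard,
        if_neg (Finset.nonempty_iff_ne_empty.mp hne)]
      rw [pow_succ]
      ring
    · have hSe : S = ∅ := Finset.not_nonempty_iff_eq_empty.mp hne
      subst hSe
      rw [if_neg hne, if_pos (Finset.insert_nonempty _ _), hg, hcard, if_pos rfl]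
      have hemp : (∅ : Finset (Finset X)).inf id = Finset.univ := by
        rw [Finset.inf_empty]
        rfl
      rw [hemp]
      norm_num
  rw [Finset.sum_congr rfl key, Finset.sum_ite_eq' (𝒰.erase U.1).powerset ∅
    (fun _ => gfun 𝒰 e z U s Finset.univ), if_pos (Finset.empty_mem_powerset _)]

end AuxNS2

/-- the vector induced by a No-Signalling empirical model is in the
image under `L` of the signed probability measures `D±(Ω)`. -/
theorem exists_signed_measure_of_noSignalling {X : Type} [Fintype X] [DecidableEq X]
    (l : ℕ) (hl : 0 < l) (𝒰 : Finset (Finset X))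
    (e : (U : {U // U ∈ 𝒰}) → ({x // x ∈ U.1} → Fin l) → ℝ)
    (he : IsEmpirical 𝒰 e) (hns : NoSignalling 𝒰 e) :
    ∃ v : (X → Fin l) → ℝ, (∑ ω : X → Fin l, v ω = 1) ∧ Lmap 𝒰 v = indVec 𝒰 e := by
  classical
  obtain ⟨hpos, hmass, hctx⟩ := he
  have hUne : 𝒰.Nonempty := by
    by_contra h
    rw [Finset.not_nonempty_iff_eq_empty] at h
    subst h
    have hemp : IsEmpty {U // U ∈ (∅ : Finset (Finset X))} :=
      ⟨fun U => absurd U.2 (Finset.notMem_empty U.1)⟩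
    rw [Finset.univ_eq_empty, Finset.sum_empty] at hmass
    exact zero_ne_one hmass
  have hL : ∀ (U : {U // U ∈ 𝒰}) (s : {x // x ∈ U.1} → Fin l),
      (∑ ω : X → Fin l, if restr U.1 ω = s then
          (∑ S ∈ 𝒰.powerset, pieceS 𝒰 e hl S ω) else 0)
      = eCond 𝒰 e U s := by
    intro U s
    have swap : (∑ ω : X → Fin l, if restr U.1 ω = s then
          (∑ S ∈ 𝒰.powerset, pieceS 𝒰 e hl S ω) else 0)
        = ∑ S ∈ 𝒰.powerset, ∑ ω : X → Fin l,
            if restr U.1 ω = s then pieceS 𝒰 e hl S ω else 0 := by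
      rw [Finset.sum_comm]
      refine Finset.sum_congr rfl fun ω _ => ?_
      by_cases hc : restr U.1 ω = s
      · simp only [hc, if_true]
      · simp only [hc, if_false, Finset.sum_const_zero]
    rw [swap]
    have step : ∀ S ∈ 𝒰.powerset,
        (∑ ω : X → Fin l, if restr U.1 ω = s then pieceS 𝒰 e hl S ω else 0)
        = if S.Nonempty then
            (-1 : ℝ) ^ (S.card + 1) * gfun 𝒰 e ⟨0, hl⟩ U s (S.inf id)
          else 0 := fun S hS =>
      pieceS_marg 𝒰 e hl hns U s S (Finset.mem_powerset.mp hS)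
    rw [Finset.sum_congr rfl step, sum_gfun, gfun_univ]
  refine ⟨fun ω => ∑ S ∈ 𝒰.powerset, pieceS 𝒰 e hl S ω, ?_, ?_⟩
  · obtain ⟨U0, hU0⟩ := hUne
    have h1 : (∑ ω : X → Fin l, ∑ S ∈ 𝒰.powerset, pieceS 𝒰 e hl S ω)
        = ∑ t : {x // x ∈ (⟨U0, hU0⟩ : {U // U ∈ 𝒰}).1} → Fin l,
            ∑ ω : X → Fin l, if restr U0 ω = t then
              (∑ S ∈ 𝒰.powerset, pieceS 𝒰 e hl S ω) else 0 := by
      calc (∑ ω : X → Fin l, ∑ S ∈ 𝒰.powerset, pieceS 𝒰 e hl S ω)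
          = ∑ ω : X → Fin l, ∑ t : {x // x ∈ (⟨U0, hU0⟩ : {U // U ∈ 𝒰}).1} → Fin l,
              if restr U0 ω = t then (∑ S ∈ 𝒰.powerset, pieceS 𝒰 e hl S ω) else 0 :=
            Finset.sum_congr rfl fun ω _ => (Fintype.sum_ite_eq (restr U0 ω)
              (fun _ => ∑ S ∈ 𝒰.powerset, pieceS 𝒰 e hl S ω)).symm
        _ = _ := Finset.sum_comm
    rw [h1, Finset.sum_congr rfl fun t _ => hL ⟨U0, hU0⟩ t]
    unfold eCond
    rw [← Finset.sum_div]
    show eCtx 𝒰 e ⟨U0, hU0⟩ / eCtx 𝒰 e ⟨U0, hU0⟩ = 1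
    exact div_self (ne_of_gt (hctx _))
  · funext p
    obtain ⟨U, s⟩ := p
    exact hL U s
end
end

section
/- Every empirical model e satisfying No-Signalling is realized by some schv model satisfying Lambda-Independence. -/
set_option linter.unusedSectionVars false


open Finset

noncomputable section

section Aux
variable {X O : Type} [Fintype X] [DecidableEq X] [Fintype O] [DecidableEq O]

def marg (U : Finset X) (d : (X → O) → ℝ) (s : {x // x ∈ U} → O) : ℝ :=
  ∑ ω : X → O, if restr U ω = s then d ω else 0

def margS {U V : Finset X} (h : V ⊆ U) (f : ({x // x ∈ U} → O) → ℝ)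
    (s : {x // x ∈ V} → O) : ℝ :=
  ∑ t : {x // x ∈ U} → O, if restrSec h t = s then f t else 0

def ext0 (o : O) (U : Finset X) (s : {x // x ∈ U} → O) : X → O :=
  fun x => if h : x ∈ U then s ⟨x, h⟩ else o

lemma restr_ext0 (o : O) (U : Finset X) (s : {x // x ∈ U} → O) :
    restr U (ext0 o U s) = s := by
  funext x; simp [restr, ext0, x.2]

def extZ (o : O) (U : Finset X) (c : ({x // x ∈ U} → O) → ℝ) : (X → O) → ℝ :=
  fun ω => if ω = ext0 o U (restr U ω) then c (restr U ω) else 0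

lemma margS_marg {U V : Finset X} (h : V ⊆ U) (d : (X → O) → ℝ)
    (s : {x // x ∈ V} → O) : margS h (marg U d) s = marg V d s := by
  have key : ∀ t : {x // x ∈ U} → O, (if restrSec h t = s then marg U d t else 0)
      = ∑ ω : X → O, if restr U ω = t then (if restrSec h t = s then d ω else 0) else 0 := by
    intro t
    by_cases ht : restrSec h t = s
    · simp only [ht, if_true, marg]
    · simp [ht]
  unfold margS
  rw [Finset.sum_congr rfl (fun t _ => key t), Finset.sum_comm]
  refine Finset.sum_congr rfl fun ω _ => ?_
  rw [Finset.sum_ite_eq]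
  simp only [Finset.mem_univ, if_true]
  rfl

lemma sum_marg (U : Finset X) (d : (X → O) → ℝ) :
    ∑ s : {x // x ∈ U} → O, marg U d s = ∑ ω : X → O, d ω := by
  unfold marg
  rw [Finset.sum_comm]
  refine Finset.sum_congr rfl fun ω _ => ?_
  simp

lemma marg_add (U : Finset X) (d g : (X → O) → ℝ) (s : {x // x ∈ U} → O) :
    marg U (fun ω => d ω + g ω) s = marg U d s + marg U g s := by
  unfold marg
  rw [← Finset.sum_add_distrib]
  exact Finset.sum_congr rfl fun ω _ => by split_ifs <;> simp

lemma margS_sub {U V : Finset X} (h : V ⊆ U) (f g : ({x // x ∈ U} → O) → ℝ)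
    (r : {x // x ∈ V} → O) :
    margS h (fun t => f t - g t) r = margS h f r - margS h g r := by
  unfold margS
  rw [← Finset.sum_sub_distrib]
  exact Finset.sum_congr rfl fun t _ => by split_ifs <;> simp

lemma marg_extZ (o : O) (U : Finset X) (c : ({x // x ∈ U} → O) → ℝ)
    (s : {x // x ∈ U} → O) : marg U (extZ o U c) s = c s := by
  unfold marg
  rw [Finset.sum_eq_single (ext0 o U s)]
  · simp [extZ, restr_ext0]
  · intro ω _ hω
    by_cases hr : restr U ω = s
    · simp only [hr, if_true, extZ]
      exact if_neg hω
    · simp [hr]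
  · simp

end Aux

section Aux2
variable {X O : Type} [Fintype X] [DecidableEq X] [Fintype O] [DecidableEq O]

lemma marg_extZ_other (o : O) (U W : Finset X) (c : ({x // x ∈ U} → O) → ℝ)
    (hc : ∀ r : {x // x ∈ U ∩ W} → O,
      margS (Finset.inter_subset_left : U ∩ W ⊆ U) c r = 0)
    (s : {x // x ∈ W} → O) : marg W (extZ o U c) s = 0 := by
  have hinj : Function.Injective (ext0 o U) :=
    Function.LeftInverse.injective (restr_ext0 o U)
  have step1 : marg W (extZ o U c) s
      = ∑ t : {x // x ∈ U} → O, if restr W (ext0 o U t) = s then c t else 0 := by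
    have pt : ∀ ω : X → O, (if restr W ω = s then extZ o U c ω else 0)
        = ∑ t : {x // x ∈ U} → O,
            if ext0 o U t = ω then (if restr W (ext0 o U t) = s then c t else 0) else 0 := by
      intro ω
      by_cases hω : ω = ext0 o U (restr U ω)
      · rw [Finset.sum_eq_single (restr U ω)]
        · rw [if_pos hω.symm, ← hω]
          by_cases hr : restr W ω = s
          · rw [if_pos hr, if_pos hr, extZ, if_pos hω]
          · rw [if_neg hr, if_neg hr]
        · intro t _ ht
          refine if_neg fun hcon => ht ?_
          rw [hω] at hcon
          exact hinj hcon
        · simp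
      · have hz : extZ o U c ω = 0 := if_neg hω
        rw [hz, Finset.sum_eq_zero fun t _ =>
          if_neg fun hcon => hω (by rw [← hcon, restr_ext0])]
        split_ifs <;> rfl
    unfold marg
    rw [Finset.sum_congr rfl fun ω _ => pt ω, Finset.sum_comm]
    refine Finset.sum_congr rfl fun t _ => ?_
    simp
  rw [step1]
  have equiv : ∀ t : {x // x ∈ U} → O, (restr W (ext0 o U t) = s) ↔
      ((restrSec (Finset.inter_subset_left : U ∩ W ⊆ U) t
        = restrSec (Finset.inter_subset_right : U ∩ W ⊆ W) s)
       ∧ ∀ x : {x // x ∈ W}, x.1 ∉ U → s x = o) := by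
    intro t
    constructor
    · intro h
      constructor
      · funext x
        have hxU : x.1 ∈ U := (Finset.mem_inter.mp x.2).1
        have hxW : x.1 ∈ W := (Finset.mem_inter.mp x.2).2
        have := congrFun h ⟨x.1, hxW⟩
        simpa [restr, ext0, restrSec, hxU] using this
      · intro x hx
        have := congrFun h x
        simp [restr, ext0, hx] at this
        exact this.symm
    · rintro ⟨h1, h2⟩
      funext x
      by_cases hxU : x.1 ∈ U
      · have := congrFun h1 ⟨x.1, Finset.mem_inter.mpr ⟨hxU, x.2⟩⟩
        simpa [restr, ext0, restrSec, hxU] using this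
      · have := h2 x hxU
        simp [restr, ext0, hxU, this]
  by_cases hso : ∀ x : {x // x ∈ W}, x.1 ∉ U → s x = o
  · have h0 := hc (restrSec (Finset.inter_subset_right : U ∩ W ⊆ W) s)
    have hmid : (∑ t : {x // x ∈ U} → O, if restr W (ext0 o U t) = s then c t else 0)
        = margS (Finset.inter_subset_left : U ∩ W ⊆ U) c
            (restrSec (Finset.inter_subset_right : U ∩ W ⊆ W) s) := by
      unfold margS
      refine Finset.sum_congr rfl fun t _ => ?_
      have hiff : (restr W (ext0 o U t) = s) ↔
          (restrSec (Finset.inter_subset_left : U ∩ W ⊆ U) t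
            = restrSec (Finset.inter_subset_right : U ∩ W ⊆ W) s) := by
        rw [equiv t]; exact and_iff_left hso
      simp only [hiff]
    rw [hmid, h0]
  · refine Finset.sum_eq_zero fun t _ => ?_
    exact if_neg fun hcon => hso ((equiv t).mp hcon).2

end Aux2

lemma glue {X : Type} [Fintype X] [DecidableEq X] {l : ℕ} (o : Fin l)
    (𝒰 : Finset (Finset X))
    (μ : (U : {U // U ∈ 𝒰}) → ({x // x ∈ U.1} → Fin l) → ℝ)
    (hmass : ∀ U, ∑ s : {x // x ∈ U.1} → Fin l, μ U s = 1)
    (hcons : ∀ U U' : {U // U ∈ 𝒰}, ∀ r : {x // x ∈ U.1 ∩ U'.1} → Fin l,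
      margS (fun _ hx => (Finset.mem_inter.mp hx).1) (μ U) r
        = margS (fun _ hx => (Finset.mem_inter.mp hx).2) (μ U') r)
    (𝒮 : Finset {U // U ∈ 𝒰}) :
    ∃ d : (X → Fin l) → ℝ, (∑ ω : X → Fin l, d ω = 1) ∧
      ∀ U ∈ 𝒮, ∀ s, marg U.1 d s = μ U s := by
  classical
  induction 𝒮 using Finset.induction_on with
  | empty =>
      refine ⟨fun ω => if ω = (fun _ => o) then 1 else 0, ?_, by simp⟩
      simp
  | @insert U 𝒮 hU ih =>
      obtain ⟨d, hd1, hd2⟩ := ih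
      set c : ({x // x ∈ U.1} → Fin l) → ℝ := fun t => μ U t - marg U.1 d t with hc
      refine ⟨fun ω => d ω + extZ o U.1 c ω, ?_, ?_⟩
      · rw [Finset.sum_add_distrib, hd1]
        have h2 : ∑ ω : X → Fin l, extZ o U.1 c ω
            = ∑ t : {x // x ∈ U.1} → Fin l, c t := by
          rw [← sum_marg U.1 (extZ o U.1 c)]
          exact Finset.sum_congr rfl fun t _ => marg_extZ o U.1 c t
        have h3 : ∑ t : {x // x ∈ U.1} → Fin l, c t = 0 := by
          simp only [hc, Finset.sum_sub_distrib, hmass U, sum_marg, hd1]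
          ring
        rw [h2, h3]; ring
      · intro W hW s
        rcases Finset.mem_insert.mp hW with rfl | hW'
        · rw [marg_add, marg_extZ]
          simp [hc]
        · rw [marg_add]
          have hz : marg W.1 (extZ o U.1 c) s = 0 := by
            apply marg_extZ_other
            intro r
            have e1 : margS (Finset.inter_subset_left : U.1 ∩ W.1 ⊆ U.1) c r
                = margS (Finset.inter_subset_left) (μ U) r
                  - margS (Finset.inter_subset_left) (marg U.1 d) r := margS_sub _ _ _ r
            have e2 : margS (Finset.inter_subset_left : U.1 ∩ W.1 ⊆ U.1) (marg U.1 d) r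
                = marg (U.1 ∩ W.1) d r := margS_marg _ d r
            have e3 : marg (U.1 ∩ W.1) d r
                = margS (Finset.inter_subset_right : U.1 ∩ W.1 ⊆ W.1) (marg W.1 d) r :=
              (margS_marg _ d r).symm
            have e4 : margS (Finset.inter_subset_right : U.1 ∩ W.1 ⊆ W.1) (marg W.1 d) r
                = margS (Finset.inter_subset_right) (μ W) r := by
              unfold margS
              exact Finset.sum_congr rfl fun t _ => by rw [hd2 W hW' t]
            have e5 := hcons U W r
            rw [e1, e2, e3, e4, ← e5, hcons U W r]
            ring
          rw [hz, hd2 W hW' s, add_zero]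

/-- every No-Signalling empirical model is realized by some schv model
satisfying Lambda-Independence. -/
theorem noSignalling_realized_by_lambdaIndep {X : Type} [Fintype X] [DecidableEq X]
    (l : ℕ) (hl : 0 < l) (𝒰 : Finset (Finset X))
    (e : (U : {U // U ∈ 𝒰}) → ({x // x ∈ U.1} → Fin l) → ℝ)
    (he : IsEmpirical 𝒰 e) (hns : NoSignalling 𝒰 e) :
    ∃ m : (X → Fin l) → {U // U ∈ 𝒰} → ℝ,
      IsSchv 𝒰 m ∧ LambdaIndep 𝒰 m ∧ Realizes 𝒰 m e := by
  classical
  obtain ⟨hpos, hsum1, hctx⟩ := he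
  set o : Fin l := ⟨0, hl⟩ with ho
  have hmass : ∀ U : {U // U ∈ 𝒰},
      ∑ s : {x // x ∈ U.1} → Fin l, eCond 𝒰 e U s = 1 := by
    intro U
    unfold eCond
    rw [← Finset.sum_div]
    exact div_self (ne_of_gt (hctx U))
  have hcons : ∀ U U' : {U // U ∈ 𝒰}, ∀ r : {x // x ∈ U.1 ∩ U'.1} → Fin l,
      margS (fun _ hx => (Finset.mem_inter.mp hx).1) (eCond 𝒰 e U) r
        = margS (fun _ hx => (Finset.mem_inter.mp hx).2) (eCond 𝒰 e U') r := hns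
  obtain ⟨d, hd1, hd2⟩ := glue o 𝒰 (fun U => eCond 𝒰 e U) hmass hcons Finset.univ
  refine ⟨fun ω U => d ω * eCtx 𝒰 e U, ?_, ?_, ?_⟩
  · show (∑ ω : X → Fin l, ∑ U : {U // U ∈ 𝒰}, d ω * eCtx 𝒰 e U) = 1
    have : ∀ ω : X → Fin l, ∑ U : {U // U ∈ 𝒰}, d ω * eCtx 𝒰 e U = d ω := by
      intro ω; rw [← Finset.mul_sum, hsum1, mul_one]
    rw [Finset.sum_congr rfl fun ω _ => this ω, hd1]
  · intro ω U
    have h1 : mOmega 𝒰 (fun ω U => d ω * eCtx 𝒰 e U) ω = d ω := by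
      unfold mOmega; rw [← Finset.mul_sum, hsum1, mul_one]
    have h2 : mCtx 𝒰 (fun ω U => d ω * eCtx 𝒰 e U) U = eCtx 𝒰 e U := by
      unfold mCtx; rw [← Finset.sum_mul, hd1, one_mul]
    rw [h1, h2]
  · intro U s
    have h1 : ∑ ω : X → Fin l,
        (if restr U.1 ω = s then d ω * eCtx 𝒰 e U else 0)
        = (marg U.1 d s) * eCtx 𝒰 e U := by
      unfold marg
      rw [Finset.sum_mul]
      exact Finset.sum_congr rfl fun ω _ => by split_ifs <;> simp
    show e U s = ∑ ω : X → Fin l, if restr U.1 ω = s then d ω * eCtx 𝒰 e U else 0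
    rw [h1, hd2 U (Finset.mem_univ U) s]
    unfold eCond
    rw [div_mul_cancel₀]
    exact ne_of_gt (hctx U)
end
end

section
/- For any canonical hidden-variable model m, the induced general hidden-variable model h_m on the hidden-variable set Ω is Parameter-Independent: for all U, V ∈ 𝒰, s ∈ O^{U∩V} and ω ∈ Ω with the relevant conditioning events having nonzero measure, h_m(s | U, ω) = h_m(s | V, ω); indeed both conditionals equal 1 if ω|_{U∩V} = s and 0 otherwise. -/
open Finset

noncomputable section

/-- The general hidden-variable model on the hidden-variable set `Λ = Ω` induced by a
canonical hidden-variable model `m`: `h_m(U,s,ω) = m(ω,U)` if `ω|_U = s`, else `0`. -/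
def hmInd {X O : Type} [Fintype X] [DecidableEq X] [Fintype O] [DecidableEq O]
    (𝒰 : Finset (Finset X)) (m : (X → O) → {U // U ∈ 𝒰} → ℝ)
    (U : {U // U ∈ 𝒰}) (s : {x // x ∈ U.1} → O) (ω : X → O) : ℝ :=
  if restr U.1 ω = s then m ω U else 0


lemma sum_hmInd {X O : Type} [Fintype X] [DecidableEq X] [Fintype O] [DecidableEq O]
    (𝒰 : Finset (Finset X)) (m : (X → O) → {U // U ∈ 𝒰} → ℝ)
    (U : {U // U ∈ 𝒰}) (ω : X → O) :
    (∑ t : {x // x ∈ U.1} → O, hmInd 𝒰 m U t ω) = m ω U := by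
  rw [Fintype.sum_eq_single (restr U.1 ω)]
  · simp [hmInd]
  · intro t ht
    simp [hmInd, Ne.symm ht]

lemma sum_hmInd_cond {X O : Type} [Fintype X] [DecidableEq X] [Fintype O] [DecidableEq O]
    (𝒰 : Finset (Finset X)) (m : (X → O) → {U // U ∈ 𝒰} → ℝ)
    (U : {U // U ∈ 𝒰}) (V : Finset X) (h : V ⊆ U.1) (s : {x // x ∈ V} → O) (ω : X → O) :
    (∑ t : {x // x ∈ U.1} → O, if restrSec h t = s then hmInd 𝒰 m U t ω else 0)
      = if restr V ω = s then m ω U else 0 := by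
  rw [Fintype.sum_eq_single (restr U.1 ω)]
  · have : restrSec h (restr U.1 ω) = restr V ω := rfl
    simp [hmInd, this]
  · intro t ht
    simp [hmInd, Ne.symm ht]

/-- the general hidden-variable model `h_m` induced by a canonical model
`m` is Parameter-Independent: whenever the conditioning events have nonzero measure,
both conditionals `h_m(s | U, ω)` and `h_m(s | V, ω)` agree, and each equals `1` if
`ω|_{U ∩ V} = s` and `0` otherwise. -/
theorem hmInd_paramIndep {X O : Type} [Fintype X] [DecidableEq X]
    [Fintype O] [DecidableEq O]
    (𝒰 : Finset (Finset X)) (m : (X → O) → {U // U ∈ 𝒰} → ℝ)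
    (U V : {U // U ∈ 𝒰}) (s : {x // x ∈ U.1 ∩ V.1} → O) (ω : X → O)
    (hU : (∑ t : {x // x ∈ U.1} → O, hmInd 𝒰 m U t ω) ≠ 0)
    (hV : (∑ t : {x // x ∈ V.1} → O, hmInd 𝒰 m V t ω) ≠ 0) :
    ((∑ t : {x // x ∈ U.1} → O,
        if restrSec (V := U.1 ∩ V.1) (fun _ hx => (Finset.mem_inter.mp hx).1) t = s
          then hmInd 𝒰 m U t ω else 0) / (∑ t : {x // x ∈ U.1} → O, hmInd 𝒰 m U t ω)
      = (∑ t : {x // x ∈ V.1} → O,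
          if restrSec (V := U.1 ∩ V.1) (fun _ hx => (Finset.mem_inter.mp hx).2) t = s
            then hmInd 𝒰 m V t ω else 0) / (∑ t : {x // x ∈ V.1} → O, hmInd 𝒰 m V t ω)) ∧
    ((∑ t : {x // x ∈ U.1} → O,
        if restrSec (V := U.1 ∩ V.1) (fun _ hx => (Finset.mem_inter.mp hx).1) t = s
          then hmInd 𝒰 m U t ω else 0) / (∑ t : {x // x ∈ U.1} → O, hmInd 𝒰 m U t ω)
      = if restr (U.1 ∩ V.1) ω = s then (1 : ℝ) else 0) ∧
    ((∑ t : {x // x ∈ V.1} → O,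
        if restrSec (V := U.1 ∩ V.1) (fun _ hx => (Finset.mem_inter.mp hx).2) t = s
          then hmInd 𝒰 m V t ω else 0) / (∑ t : {x // x ∈ V.1} → O, hmInd 𝒰 m V t ω)
      = if restr (U.1 ∩ V.1) ω = s then (1 : ℝ) else 0) := by
  have hUV1 : U.1 ∩ V.1 ⊆ U.1 := fun _ hx => (Finset.mem_inter.mp hx).1
  have hUV2 : U.1 ∩ V.1 ⊆ V.1 := fun _ hx => (Finset.mem_inter.mp hx).2
  rw [sum_hmInd] at hU hV
  rw [sum_hmInd_cond 𝒰 m U (U.1 ∩ V.1) hUV1 s ω,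
      sum_hmInd_cond 𝒰 m V (U.1 ∩ V.1) hUV2 s ω, sum_hmInd, sum_hmInd]
  by_cases hres : restr (U.1 ∩ V.1) ω = s
  · simp [hres, div_self hU, div_self hV]
  · simp [hres]
end
end

section
/- There exists a measurement scenario and a general hidden-variable model h which is Lambda-Independent but not Parameter-Independent, such that the empirical model e realized by h satisfies No-Signalling. Concretely, one may take the cover 𝒰 = {{a,b₀},{a,b₁}} with outcome set {x₀,x₁,y}, hidden variables Λ = {λ₀,λ₁}, and h assigning probability 1/4 to each of ({a,b₀}, {a↦x₀, b₀↦y}, λ₀), ({a,b₁}, {a↦x₀, b₁↦y}, λ₁), ({a,b₁}, {a↦x₁, b₁↦y}, λ₀), and ({a,b₀}, {a↦x₁, b₀↦y}, λ₁), and 0 elsewhere. -/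
open Finset

noncomputable section

/-- The marginal on `Λ` of a general hidden-variable model. -/
def hMargL {X O Λ : Type} [Fintype X] [DecidableEq X] [Fintype O] [DecidableEq O] [Fintype Λ]
    (𝒰 : Finset (Finset X))
    (h : (U : {U // U ∈ 𝒰}) → ({x // x ∈ U.1} → O) → Λ → ℝ) (lam : Λ) : ℝ :=
  ∑ U : {U // U ∈ 𝒰}, ∑ s : {x // x ∈ U.1} → O, h U s lam

/-- `h` is a general hidden-variable model: a signed measure of total mass one on `E × Λ`. -/
def GIsHvm {X O Λ : Type} [Fintype X] [DecidableEq X] [Fintype O] [DecidableEq O] [Fintype Λ]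
    (𝒰 : Finset (Finset X))
    (h : (U : {U // U ∈ 𝒰}) → ({x // x ∈ U.1} → O) → Λ → ℝ) : Prop :=
  ∑ lam : Λ, hMargL 𝒰 h lam = 1

/-- Lambda-Independence for general hidden-variable models:
`h(U,s,λ) = h^λ(U,s) · h_Λ(λ)`, where `h^λ(U,s) = h(U,s,λ)/h_Λ(λ)` is the
conditional measure on events given `λ`. -/
def GLambdaIndep {X O Λ : Type} [Fintype X] [DecidableEq X] [Fintype O] [DecidableEq O] [Fintype Λ]
    (𝒰 : Finset (Finset X))
    (h : (U : {U // U ∈ 𝒰}) → ({x // x ∈ U.1} → O) → Λ → ℝ) : Prop :=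
  ∀ (U : {U // U ∈ 𝒰}) (s : {x // x ∈ U.1} → O) (lam : Λ),
    h U s lam = (h U s lam / hMargL 𝒰 h lam) * hMargL 𝒰 h lam

/-- Parameter-Independence: `h(s | U, λ) = h(s | V, λ)` for sections `s` on `U ∩ V`. -/
def GParamIndep {X O Λ : Type} [Fintype X] [DecidableEq X] [Fintype O] [DecidableEq O] [Fintype Λ]
    (𝒰 : Finset (Finset X))
    (h : (U : {U // U ∈ 𝒰}) → ({x // x ∈ U.1} → O) → Λ → ℝ) : Prop :=
  ∀ U V : {U // U ∈ 𝒰}, ∀ s : {x // x ∈ U.1 ∩ V.1} → O, ∀ lam : Λ,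
    (∑ t : {x // x ∈ U.1} → O,
        if restrSec (V := U.1 ∩ V.1) (fun _ hx => (Finset.mem_inter.mp hx).1) t = s
          then h U t lam else 0) / (∑ t : {x // x ∈ U.1} → O, h U t lam) =
    (∑ t : {x // x ∈ V.1} → O,
        if restrSec (V := U.1 ∩ V.1) (fun _ hx => (Finset.mem_inter.mp hx).2) t = s
          then h V t lam else 0) / (∑ t : {x // x ∈ V.1} → O, h V t lam)

/-- `h` realizes `e`: the empirical table is recovered by summing over the hidden variable. -/
def GRealizes {X O Λ : Type} [Fintype X] [DecidableEq X] [Fintype O] [DecidableEq O] [Fintype Λ]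
    (𝒰 : Finset (Finset X))
    (h : (U : {U // U ∈ 𝒰}) → ({x // x ∈ U.1} → O) → Λ → ℝ)
    (e : (U : {U // U ∈ 𝒰}) → ({x // x ∈ U.1} → O) → ℝ) : Prop :=
  ∀ (U : {U // U ∈ 𝒰}) (s : {x // x ∈ U.1} → O),
    e U s = ∑ lam : Λ, h U s lam

/-! ### Auxiliary constructions for the example -/

namespace GhvmEx

def g0 : Fin 3 → Fin 3 := ![0, 2, 2]
def g1 : Fin 3 → Fin 3 := ![1, 2, 2]

def Uex : Finset (Finset (Fin 3)) := {{0, 1}, {0, 2}}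

/-- The empirical table: weight ¼ on the restrictions of `g0` and `g1` in each context. -/
def eEx : (U : {U // U ∈ Uex}) → ({x // x ∈ U.1} → Fin 3) → ℝ :=
  fun U s => (if s = restr U.1 g0 then (4:ℝ)⁻¹ else 0) +
             (if s = restr U.1 g1 then (4:ℝ)⁻¹ else 0)

/-- The hidden-variable model. -/
def hEx : (U : {U // U ∈ Uex}) → ({x // x ∈ U.1} → Fin 3) → Fin 2 → ℝ :=
  fun U s lam =>
    (if s = restr U.1 g0 ∧ ((U.1 = ({0,1} : Finset (Fin 3))) ↔ lam = 0) then (4:ℝ)⁻¹ else 0) +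
    (if s = restr U.1 g1 ∧ ¬((U.1 = ({0,1} : Finset (Fin 3))) ↔ lam = 0) then (4:ℝ)⁻¹ else 0)

lemma sum_ite_comp {α : Type} [Fintype α] [DecidableEq α] (P : α → Prop) [DecidablePred P]
    (t0 : α) (a : ℝ) :
    ∑ t : α, (if P t then (if t = t0 then a else 0) else 0) = if P t0 then a else 0 := by
  have key : ∀ t : α, (if P t then (if t = t0 then a else 0) else 0)
      = if t = t0 then (if P t0 then a else 0) else 0 := by
    intro t
    by_cases ht : t = t0
    · subst ht; by_cases hp : P t <;> simp [hp]
    · simp [ht]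
  simp only [key]
  simp

lemma mem_Uex (U : {U // U ∈ Uex}) :
    U.1 = ({0,1} : Finset (Fin 3)) ∨ U.1 = ({0,2} : Finset (Fin 3)) := by
  have h2 := U.2
  simp only [Uex, Finset.mem_insert, Finset.mem_singleton] at h2
  exact h2

lemma restr_ne (U : {U // U ∈ Uex}) : restr U.1 g0 ≠ restr U.1 g1 := by
  have h0 : (0 : Fin 3) ∈ U.1 := by
    rcases mem_Uex U with h | h <;> rw [h] <;> decide
  intro heq
  have hval := congrFun heq ⟨0, h0⟩
  simp [restr, g0, g1] at hval

lemma hEx_sum (U : {U // U ∈ Uex}) (lam : Fin 2) :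
    ∑ s : {x // x ∈ U.1} → Fin 3, hEx U s lam = (4:ℝ)⁻¹ := by
  unfold hEx
  rw [Finset.sum_add_distrib]
  have rw1 : ∀ (t0 : {x // x ∈ U.1} → Fin 3) (A : Prop) [Decidable A],
      ∀ s, (if s = t0 ∧ A then (4:ℝ)⁻¹ else 0) = if A then (if s = t0 then (4:ℝ)⁻¹ else 0) else 0 := by
    intro t0 A _ s
    by_cases hA : A <;> simp [hA]
  simp only [rw1]
  by_cases hA : (U.1 = ({0,1} : Finset (Fin 3))) ↔ lam = 0 <;> simp [hA]

lemma hMargL_eq (lam : Fin 2) : hMargL Uex hEx lam = (2:ℝ)⁻¹ := by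
  unfold hMargL
  simp only [hEx_sum]
  rw [Finset.sum_const, Finset.card_univ, Fintype.card_coe]
  have : Uex.card = 2 := by decide
  rw [this]
  norm_num

lemma eCtx_eq (U : {U // U ∈ Uex}) : eCtx Uex eEx U = (2:ℝ)⁻¹ := by
  unfold eCtx eEx
  rw [Finset.sum_add_distrib]
  simp
  norm_num

lemma eCond_eq (U : {U // U ∈ Uex}) (t : {x // x ∈ U.1} → Fin 3) :
    eCond Uex eEx U t = (if t = restr U.1 g0 then (2:ℝ)⁻¹ else 0) +
                        (if t = restr U.1 g1 then (2:ℝ)⁻¹ else 0) := by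
  unfold eCond
  rw [eCtx_eq]
  unfold eEx
  have hne := restr_ne U
  have hne' := (restr_ne U).symm
  by_cases h0 : t = restr U.1 g0 <;> by_cases h1 : t = restr U.1 g1 <;>
    simp [h0, h1, hne, hne'] <;> norm_num

end GhvmEx

/-- there is a measurement scenario and a general hidden-variable model
`h` which is Lambda-Independent but not Parameter-Independent, such that the empirical
model `e` realized by `h` satisfies No-Signalling. -/
theorem exists_ghvm_LI_not_PI_noSignalling :
    ∃ (X O Λ : Type) (iX : Fintype X) (dX : DecidableEq X)
      (iO : Fintype O) (dO : DecidableEq O) (iΛ : Fintype Λ)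
      (𝒰 : Finset (Finset X))
      (e : (U : {U // U ∈ 𝒰}) → ({x // x ∈ U.1} → O) → ℝ)
      (h : (U : {U // U ∈ 𝒰}) → ({x // x ∈ U.1} → O) → Λ → ℝ),
      @IsEmpirical X O iX dX iO dO 𝒰 e ∧
      @GIsHvm X O Λ iX dX iO dO iΛ 𝒰 h ∧
      @GLambdaIndep X O Λ iX dX iO dO iΛ 𝒰 h ∧
      ¬ @GParamIndep X O Λ iX dX iO dO iΛ 𝒰 h ∧
      @GRealizes X O Λ iX dX iO dO iΛ 𝒰 h e ∧
      @NoSignalling X O iX dX iO dO 𝒰 e := by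
  classical
  open GhvmEx in
  refine ⟨Fin 3, Fin 3, Fin 2, inferInstance, inferInstance, inferInstance, inferInstance,
    inferInstance, Uex, eEx, hEx, ?_, ?_, ?_, ?_, ?_, ?_⟩
  · -- IsEmpirical
    refine ⟨?_, ?_, ?_⟩
    · intro U s
      unfold eEx
      positivity
    · simp only [eCtx_eq]
      rw [Finset.sum_const, Finset.card_univ, Fintype.card_coe]
      have : Uex.card = 2 := by decide
      rw [this]; norm_num
    · intro U; rw [eCtx_eq]; norm_num
  · -- GIsHvm
    unfold GIsHvm
    simp only [hMargL_eq]
    rw [Fin.sum_univ_two]; norm_num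
  · -- GLambdaIndep
    intro U s lam
    rw [hMargL_eq]
    field_simp
  · -- ¬ GParamIndep
    intro hPI
    have hU : ({0,1} : Finset (Fin 3)) ∈ Uex := by decide
    have hV : ({0,2} : Finset (Fin 3)) ∈ Uex := by decide
    have h := hPI ⟨{0,1}, hU⟩ ⟨{0,2}, hV⟩ (fun _ => (0 : Fin 3)) 0
    have hsimpU : ∀ t : {x // x ∈ ({0,1} : Finset (Fin 3))} → Fin 3,
        hEx ⟨{0,1}, hU⟩ t 0 = if t = restr ({0,1} : Finset (Fin 3)) g0 then (4:ℝ)⁻¹ else 0 := by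
      intro t; unfold hEx; simp
    have hsimpV : ∀ t : {x // x ∈ ({0,2} : Finset (Fin 3))} → Fin 3,
        hEx ⟨{0,2}, hV⟩ t 0 = if t = restr ({0,2} : Finset (Fin 3)) g1 then (4:ℝ)⁻¹ else 0 := by
      intro t; unfold hEx
      have : ¬(({0,2} : Finset (Fin 3)) = ({0,1} : Finset (Fin 3))) := by decide
      simp [this]
    simp only [hsimpU, hsimpV] at h
    rw [sum_ite_comp, sum_ite_comp] at h
    simp only [Finset.sum_ite_eq', Finset.mem_univ, if_true] at h
    have c1 : restrSec (U := ({0,1} : Finset (Fin 3))) (V := ({0,1} : Finset (Fin 3)) ∩ {0,2})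
        (fun _ hx => (Finset.mem_inter.mp hx).1) (restr ({0,1} : Finset (Fin 3)) g0)
        = (fun _ => (0 : Fin 3)) := by decide
    have c2 : restrSec (U := ({0,2} : Finset (Fin 3))) (V := ({0,1} : Finset (Fin 3)) ∩ {0,2})
        (fun _ hx => (Finset.mem_inter.mp hx).2) (restr ({0,2} : Finset (Fin 3)) g1)
        ≠ (fun _ => (0 : Fin 3)) := by decide
    rw [if_pos c1, if_neg c2] at h
    norm_num at h
  · -- GRealizes
    intro U s
    rw [Fin.sum_univ_two]
    unfold eEx hEx
    have h10 : ¬((1 : Fin 2) = 0) := by decide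
    have hne := GhvmEx.restr_ne U
    have hne' := (GhvmEx.restr_ne U).symm
    by_cases hA : U.1 = ({0,1} : Finset (Fin 3)) <;>
      by_cases h0 : s = restr U.1 g0 <;> by_cases h1 : s = restr U.1 g1 <;>
      simp [hA, h0, h1, h10, hne, hne']
  · -- NoSignalling
    intro U U' s
    have key : ∀ (W : {U // U ∈ Uex}) (hsub : U.1 ∩ U'.1 ⊆ W.1),
        (∑ t : {x // x ∈ W.1} → Fin 3,
          if restrSec hsub t = s then eCond Uex eEx W t else 0) =
        (if restr (U.1 ∩ U'.1) g0 = s then (2:ℝ)⁻¹ else 0) +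
        (if restr (U.1 ∩ U'.1) g1 = s then (2:ℝ)⁻¹ else 0) := by
      intro W hsub
      simp only [eCond_eq]
      have split : ∀ t : {x // x ∈ W.1} → Fin 3,
          (if restrSec hsub t = s then
            (if t = restr W.1 g0 then (2:ℝ)⁻¹ else 0) +
            (if t = restr W.1 g1 then (2:ℝ)⁻¹ else 0) else 0) =
          (if restrSec hsub t = s then (if t = restr W.1 g0 then (2:ℝ)⁻¹ else 0) else 0) +
          (if restrSec hsub t = s then (if t = restr W.1 g1 then (2:ℝ)⁻¹ else 0) else 0) := by
        intro t; by_cases ht : restrSec hsub t = s <;> simp [ht]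
      simp only [split]
      rw [Finset.sum_add_distrib, sum_ite_comp, sum_ite_comp]
      have e0 : restrSec hsub (restr W.1 g0) = restr (U.1 ∩ U'.1) g0 := rfl
      have e1 : restrSec hsub (restr W.1 g1) = restr (U.1 ∩ U'.1) g1 := rfl
      rw [e0, e1]
    rw [key U (fun _ hx => (Finset.mem_inter.mp hx).1),
        key U' (fun _ hx => (Finset.mem_inter.mp hx).2)]
end
end
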